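/- arXiv:1904.12142 — 10 statements merged into one kernel-verified Lean document; each statement's English description precedes it below -/
import Mathlib

section
/- For every integer m ≥ 8 there exists a dimension d ≥ 1 and a training set P in EuclideanSpace ℝ (Fin d) which has at most 4 border points and at most 4 points that are a nearest enemy of some point of P, and yet the set MSS(P) = { q ∈ P : ∃ p ∈ P such that ‖p − q‖ < d_ne(p) and d_ne(q) ≤ d_ne(q') for every q' ∈ P with ‖p − q'‖ < d_ne(p) } contains at least m/4 points. (Concretely, one may take d = 1 and P consisting of two red points r₁, r₂ at distance 1 together with blue points bᵢ = r₁ + (i/(4m))·(r₂ − r₁) for i = 1, …, 3m.) -/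
/-- The nearest-enemy distance of `p`: the minimum of `‖p - q‖` over enemies `q` of `p`. -/
noncomputable def dne {d : ℕ} {Λ : Type*} (P : Finset (EuclideanSpace ℝ (Fin d)))
    (l : EuclideanSpace ℝ (Fin d) → Λ) (p : EuclideanSpace ℝ (Fin d)) : ℝ :=
  sInf {r : ℝ | ∃ q ∈ P, l q ≠ l p ∧ r = ‖p - q‖}

/-- `q` is a nearest enemy of `p` in `P`: an enemy of `p` at minimum distance. -/
def IsNearestEnemy {d : ℕ} {Λ : Type*} (P : Finset (EuclideanSpace ℝ (Fin d)))
    (l : EuclideanSpace ℝ (Fin d) → Λ) (p q : EuclideanSpace ℝ (Fin d)) : Prop :=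
  q ∈ P ∧ l q ≠ l p ∧ ∀ q' ∈ P, l q' ≠ l p → ‖p - q‖ ≤ ‖p - q'‖

/-- `p` is a border point of `P`. -/
def IsBorder {d : ℕ} {Λ : Type*} (P : Finset (EuclideanSpace ℝ (Fin d)))
    (l : EuclideanSpace ℝ (Fin d) → Λ) (p : EuclideanSpace ℝ (Fin d)) : Prop :=
  ∃ q ∈ P, l q ≠ l p ∧ ∃ (z : EuclideanSpace ℝ (Fin d)) (ρ : ℝ), 0 < ρ ∧
    ‖z - p‖ = ρ ∧ ‖z - q‖ = ρ ∧ ∀ x ∈ P, ρ ≤ ‖z - x‖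

lemma dne_eq {d : ℕ} {Λ : Type*} (P : Finset (EuclideanSpace ℝ (Fin d)))
    (l : EuclideanSpace ℝ (Fin d) → Λ) (p q0 : EuclideanSpace ℝ (Fin d))
    (h0 : q0 ∈ P) (hl : l q0 ≠ l p)
    (hmin : ∀ q ∈ P, l q ≠ l p → ‖p - q0‖ ≤ ‖p - q‖) :
    dne P l p = ‖p - q0‖ := by
  unfold dne
  apply le_antisymm
  · apply csInf_le
    · refine ⟨0, ?_⟩
      rintro r ⟨q, hq, hlq, rfl⟩
      exact norm_nonneg _
    · exact ⟨q0, h0, hl, rfl⟩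
  · have hne : {r : ℝ | ∃ q ∈ P, l q ≠ l p ∧ r = ‖p - q‖}.Nonempty :=
      ⟨‖p - q0‖, q0, h0, hl, rfl⟩
    apply le_csInf hne
    rintro r ⟨q, hq, hlq, rfl⟩
    exact hmin q hq hlq

noncomputable def pt (t : ℝ) : EuclideanSpace ℝ (Fin 1) := EuclideanSpace.single 0 t

lemma pt_norm_sub (s t : ℝ) : ‖pt s - pt t‖ = |s - t| := by
  have : pt s - pt t = pt (s - t) := by
    ext j
    simp [pt, EuclideanSpace.single_apply]; split <;> simp
  rw [this, pt, EuclideanSpace.norm_single]; rfl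

lemma pt_apply (t : ℝ) : pt t 0 = t := by simp [pt, EuclideanSpace.single_apply]

lemma eq_pt (z : EuclideanSpace ℝ (Fin 1)) : z = pt (z 0) := by
  ext j
  have : j = 0 := Subsingleton.elim _ _
  subst this
  simp [pt, EuclideanSpace.single_apply]

lemma pt_inj : Function.Injective pt := by
  intro s t h
  have := congrArg (fun z : EuclideanSpace ℝ (Fin 1) => z 0) h
  simpa [pt_apply] using this

section Construction
open Classical

variable (m : ℕ)

def S (m : ℕ) : Finset ℕ := insert 0 (insert (4*m) (Finset.Icc 1 (3*m)))

noncomputable def Pm (m : ℕ) : Finset (EuclideanSpace ℝ (Fin 1)) :=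
  (S m).image (fun n : ℕ => pt (n : ℝ))

noncomputable def lab (m : ℕ) : EuclideanSpace ℝ (Fin 1) → Bool :=
  fun x => if x 0 = 0 ∨ x 0 = (4*m : ℝ) then true else false

lemma mem_S {n : ℕ} : n ∈ S m ↔ n = 0 ∨ n = 4*m ∨ (1 ≤ n ∧ n ≤ 3*m) := by
  simp only [S, Finset.mem_insert, Finset.mem_Icc]

lemma mem_Pm {x : EuclideanSpace ℝ (Fin 1)} :
    x ∈ Pm m ↔ ∃ n ∈ S m, x = pt (n : ℝ) := by
  simp only [Pm, Finset.mem_image]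
  constructor
  · rintro ⟨n, hn, h⟩; exact ⟨n, hn, h.symm⟩
  · rintro ⟨n, hn, h⟩; exact ⟨n, hn, h.symm⟩

lemma lab_pt (n : ℕ) : lab m (pt (n : ℝ)) = (if n = 0 ∨ n = 4*m then true else false) := by
  unfold lab
  rw [pt_apply]
  congr 1
  simp only [eq_iff_iff]
  constructor
  · rintro (h | h)
    · exact Or.inl (by exact_mod_cast h)
    · exact Or.inr (by exact_mod_cast h)
  · rintro (rfl | rfl) <;> simp

lemma lab_red0 : lab m (pt ((0:ℕ) : ℝ)) = true := by rw [lab_pt]; simp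

lemma lab_red4 : lab m (pt ((4*m:ℕ) : ℝ)) = true := by rw [lab_pt]; simp

lemma lab_blue {i : ℕ} (h1 : 1 ≤ i) (h2 : i ≤ 3*m) (hm : 1 ≤ m) :
    lab m (pt (i : ℝ)) = false := by
  rw [lab_pt]
  have : ¬(i = 0 ∨ i = 4*m) := by omega
  simp [this]


lemma enemy_iff (hm : 1 ≤ m) {i : ℕ} (h1 : 1 ≤ i) (h2 : i ≤ 3*m)
    {q : EuclideanSpace ℝ (Fin 1)} (hq : q ∈ Pm m) :
    lab m q ≠ lab m (pt (i:ℝ)) ↔ (q = pt ((0:ℕ):ℝ) ∨ q = pt ((4*m:ℕ):ℝ)) := by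
  rw [lab_blue m h1 h2 hm]
  obtain ⟨n, hn, rfl⟩ := (mem_Pm m).1 hq
  rw [lab_pt]
  rw [mem_S] at hn
  constructor
  · intro h
    by_cases hn0 : n = 0 ∨ n = 4*m
    · rcases hn0 with rfl | rfl
      · exact Or.inl rfl
      · exact Or.inr rfl
    · simp [hn0] at h
  · rintro (h | h)
    · have hn0 : n = 0 := by exact_mod_cast pt_inj h
      subst hn0; simp
    · have hn0 : n = 4*m := by exact_mod_cast pt_inj h
      subst hn0; simp

lemma mem_Pm_nat {n : ℕ} (hn : n ∈ S m) : pt ((n:ℕ):ℝ) ∈ Pm m :=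
  (mem_Pm m).2 ⟨n, hn, rfl⟩

lemma dne_blue (hm : 1 ≤ m) {i : ℕ} (h1 : 1 ≤ i) (h2 : i ≤ 3*m) :
    dne (Pm m) (lab m) (pt (i:ℝ)) = min (i:ℝ) (4*m - i) := by
  have h0P : pt ((0:ℕ):ℝ) ∈ Pm m := mem_Pm_nat m (by rw [mem_S]; tauto)
  have h4P : pt ((4*m:ℕ):ℝ) ∈ Pm m := mem_Pm_nat m (by rw [mem_S]; tauto)
  have hl0 : lab m (pt ((0:ℕ):ℝ)) ≠ lab m (pt (i:ℝ)) := by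
    rw [lab_red0, lab_blue m h1 h2 hm]; simp
  have hl4 : lab m (pt ((4*m:ℕ):ℝ)) ≠ lab m (pt (i:ℝ)) := by
    rw [lab_red4, lab_blue m h1 h2 hm]; simp
  have hi4 : (i:ℝ) ≤ 4*m := by
    have : (i:ℕ) ≤ 4*m := by omega
    exact_mod_cast this
  have d0 : ‖pt (i:ℝ) - pt ((0:ℕ):ℝ)‖ = (i:ℝ) := by
    rw [pt_norm_sub]; push_cast
    rw [sub_zero, abs_of_nonneg (by positivity)]
  have d4 : ‖pt (i:ℝ) - pt ((4*m:ℕ):ℝ)‖ = 4*(m:ℝ) - i := by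
    rw [pt_norm_sub]; push_cast
    rw [abs_of_nonpos (by linarith)]; ring
  by_cases hle : (i:ℝ) ≤ 4*m - i
  · have key : dne (Pm m) (lab m) (pt (i:ℝ)) = ‖pt (i:ℝ) - pt ((0:ℕ):ℝ)‖ := by
      apply dne_eq _ _ _ _ h0P hl0
      intro q hq hlq
      rcases (enemy_iff m hm h1 h2 hq).1 hlq with rfl | rfl
      · exact le_refl _
      · rw [d0, d4]; linarith
    rw [min_eq_left hle, key, d0]
  · have key : dne (Pm m) (lab m) (pt (i:ℝ)) = ‖pt (i:ℝ) - pt ((4*m:ℕ):ℝ)‖ := by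
      apply dne_eq _ _ _ _ h4P hl4
      intro q hq hlq
      rcases (enemy_iff m hm h1 h2 hq).1 hlq with rfl | rfl
      · rw [d0, d4]; linarith
      · exact le_refl _
    rw [min_eq_right (le_of_not_ge hle), key, d4]


lemma strict_inside {a b n t ρ : ℝ} (han : a < n) (hnb : n < b)
    (ha : |t - a| = ρ) (hb : |t - b| = ρ) : |t - n| < ρ := by
  have hρ0 : 0 ≤ ρ := ha ▸ abs_nonneg _
  rcases (abs_eq hρ0).1 ha with h1 | h1 <;>
  rcases (abs_eq hρ0).1 hb with h2 | h2 <;>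
  · rw [abs_lt]; constructor <;> linarith

lemma exists_enemy (hm : 1 ≤ m) : ∀ p ∈ Pm m, ∃ q ∈ Pm m, lab m q ≠ lab m p := by
  intro p hp
  obtain ⟨n, hn, rfl⟩ := (mem_Pm m).1 hp
  rw [mem_S] at hn
  by_cases h : n = 0 ∨ n = 4*m
  · refine ⟨pt ((1:ℕ):ℝ), mem_Pm_nat m (by rw [mem_S]; omega), ?_⟩
    rw [lab_blue m (le_refl 1) (by omega) hm]
    rcases h with rfl | rfl
    · rw [lab_red0]; simp
    · rw [lab_red4]; simp
  · have h1 : 1 ≤ n ∧ n ≤ 3*m := by omega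
    refine ⟨pt ((0:ℕ):ℝ), mem_Pm_nat m (by rw [mem_S]; omega), ?_⟩
    rw [lab_red0, lab_blue m h1.1 h1.2 hm]; simp

lemma border_mem (hm : 1 ≤ m) {x : EuclideanSpace ℝ (Fin 1)} (hx : x ∈ Pm m)
    (hb : IsBorder (Pm m) (lab m) x) :
    x = pt ((0:ℕ):ℝ) ∨ x = pt ((1:ℕ):ℝ) ∨ x = pt ((3*m:ℕ):ℝ) ∨ x = pt ((4*m:ℕ):ℝ) := by
  obtain ⟨q, hq, hlq, z, ρ, hρ, hzp, hzq, hball⟩ := hb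
  obtain ⟨a, haS, rfl⟩ := (mem_Pm m).1 hx
  obtain ⟨b, hbS, rfl⟩ := (mem_Pm m).1 hq
  rw [eq_pt z, pt_norm_sub] at hzp hzq
  have hball' : ∀ n : ℕ, n ∈ S m → ρ ≤ |z 0 - (n:ℝ)| := by
    intro n hn
    have := hball (pt ((n:ℕ):ℝ)) (mem_Pm_nat m hn)
    rwa [eq_pt z, pt_norm_sub] at this
  rw [mem_S] at haS hbS
  rw [lab_pt, lab_pt] at hlq
  by_cases hA : a = 0 ∨ a = 4*m
  · rcases hA with rfl | rfl
    · left; rfl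
    · right; right; right; rfl
  · by_cases hB : b = 0 ∨ b = 4*m
    · -- a blue, b red
      have ha1 : 1 ≤ a ∧ a ≤ 3*m := by omega
      rcases hB with rfl | rfl
      · -- b = 0 : show a = 1
        right; left
        by_contra hne
        have ha2 : 2 ≤ a := by
          rcases Nat.lt_or_ge a 2 with h | h
          · interval_cases a
            · omega
            · exact absurd rfl hne
          · exact h
        have h1 : |z 0 - ((1:ℕ):ℝ)| < ρ := by
          apply strict_inside (a := ((0:ℕ):ℝ)) (b := ((a:ℕ):ℝ)) _ _ hzq hzp
          · push_cast; norm_num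
          · push_cast; exact_mod_cast (show (1:ℕ) < a by omega)
        have h2 := hball' 1 (by rw [mem_S]; omega)
        linarith
      · -- b = 4m : show a = 3m
        right; right; left
        by_contra hne
        have hne' : a ≠ 3*m := fun h => hne (by rw [h])
        have ha2 : a + 1 ≤ 3*m := by omega
        have h1 : |z 0 - ((a+1:ℕ):ℝ)| < ρ := by
          apply strict_inside (a := ((a:ℕ):ℝ)) (b := ((4*m:ℕ):ℝ)) _ _ hzp hzq
          · push_cast; linarith
          · have : (a:ℝ) + 1 < (4*m:ℕ) := by
              have : a + 1 < 4*m := by omega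
              exact_mod_cast this
            push_cast at this ⊢; linarith
        have h2 := hball' (a+1) (by rw [mem_S]; omega)
        linarith
    · simp [hA, hB] at hlq

lemma ne_mem (hm : 1 ≤ m) {x : EuclideanSpace ℝ (Fin 1)} (hx : x ∈ Pm m)
    (hne : ∃ p ∈ Pm m, IsNearestEnemy (Pm m) (lab m) p x) :
    x = pt ((0:ℕ):ℝ) ∨ x = pt ((1:ℕ):ℝ) ∨ x = pt ((3*m:ℕ):ℝ) ∨ x = pt ((4*m:ℕ):ℝ) := by
  obtain ⟨p, hp, hxP, hlx, hmin⟩ := hne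
  obtain ⟨a, haS, rfl⟩ := (mem_Pm m).1 hp
  obtain ⟨b, hbS, rfl⟩ := (mem_Pm m).1 hx
  rw [mem_S] at haS hbS
  by_cases hA : a = 0 ∨ a = 4*m
  · -- b must be blue
    have hBblue : ¬(b = 0 ∨ b = 4*m) := by
      intro hB
      apply hlx
      rw [lab_pt, lab_pt, if_pos hA, if_pos hB]
    have hb1 : 1 ≤ b ∧ b ≤ 3*m := by omega
    rcases hA with rfl | rfl
    · -- p = pt 0, minimality against pt 1
      right; left
      have h1S : pt ((1:ℕ):ℝ) ∈ Pm m := mem_Pm_nat m (by rw [mem_S]; omega)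
      have h1l : lab m (pt ((1:ℕ):ℝ)) ≠ lab m (pt ((0:ℕ):ℝ)) := by
        rw [lab_red0, lab_blue m (le_refl 1) (by omega) hm]; simp
      have := hmin (pt ((1:ℕ):ℝ)) h1S h1l
      rw [pt_norm_sub, pt_norm_sub] at this
      push_cast at this
      rw [zero_sub, zero_sub, abs_neg, abs_neg, abs_of_nonneg (by positivity),
        abs_of_nonneg (by norm_num)] at this
      have : b ≤ 1 := by exact_mod_cast this
      have : b = 1 := by omega
      rw [this]
    · -- p = pt 4m, minimality against pt 3m
      right; right; left
      have h3S : pt ((3*m:ℕ):ℝ) ∈ Pm m := mem_Pm_nat m (by rw [mem_S]; omega)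
      have h3l : lab m (pt ((3*m:ℕ):ℝ)) ≠ lab m (pt ((4*m:ℕ):ℝ)) := by
        rw [lab_red4, lab_blue m (by omega) (le_refl _) hm]; simp
      have := hmin (pt ((3*m:ℕ):ℝ)) h3S h3l
      rw [pt_norm_sub, pt_norm_sub] at this
      push_cast at this
      rw [abs_of_nonneg (by have h' : (b:ℝ) ≤ 3*m := (by exact_mod_cast hb1.2); linarith),
        abs_of_nonneg (by have h' : (0:ℝ) ≤ m := (by positivity); linarith)] at this
      have hble : 3*m ≤ b := by
        have : (3*(m:ℝ)) ≤ b := by linarith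
        exact_mod_cast this
      have : b = 3*m := by omega
      rw [this]
  · -- a blue: every enemy of a is pt 0 or pt 4m
    have ha1 : 1 ≤ a ∧ a ≤ 3*m := by omega
    rcases (enemy_iff m hm ha1.1 ha1.2 ((mem_Pm m).2 ⟨b, by rw [mem_S]; tauto, rfl⟩)).1 hlx with h | h
    · left; exact h
    · right; right; right; exact h


lemma mss_mem (hm : 8 ≤ m) {k : ℕ} (hk : k < m / 2) :
    pt ((2*k+1:ℕ):ℝ) ∈ Pm m ∧ ∃ p ∈ Pm m,
      ‖p - pt ((2*k+1:ℕ):ℝ)‖ < dne (Pm m) (lab m) p ∧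
      ∀ q' ∈ Pm m, ‖p - q'‖ < dne (Pm m) (lab m) p →
        dne (Pm m) (lab m) (pt ((2*k+1:ℕ):ℝ)) ≤ dne (Pm m) (lab m) q' := by
  have hm1 : 1 ≤ m := by omega
  have h2k : 2*k+2 ≤ m := by omega
  have hkm : (2*(k:ℝ)+2) ≤ m := by exact_mod_cast h2k
  have h0k : (0:ℝ) ≤ k := by positivity
  have hqS : 2*k+1 ∈ S m := by rw [mem_S]; omega
  have hq1 : 1 ≤ 2*k+1 := by omega
  have hq3 : 2*k+1 ≤ 3*m := by omega
  have hp1 : 1 ≤ 2*m+k := by omega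
  have hp3 : 2*m+k ≤ 3*m := by omega
  have hdp : dne (Pm m) (lab m) (pt ((2*m+k:ℕ):ℝ)) = 2*(m:ℝ) - k := by
    rw [dne_blue m hm1 hp1 hp3, min_eq_right]
    · push_cast; ring
    · push_cast; linarith
  have hdq : dne (Pm m) (lab m) (pt ((2*k+1:ℕ):ℝ)) = 2*(k:ℝ) + 1 := by
    rw [dne_blue m hm1 hq1 hq3, min_eq_left]
    · push_cast; ring
    · push_cast; linarith
  refine ⟨mem_Pm_nat m hqS, pt ((2*m+k:ℕ):ℝ), mem_Pm_nat m (by rw [mem_S]; omega), ?_, ?_⟩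
  · rw [hdp, pt_norm_sub]
    push_cast
    rw [abs_of_nonneg (by linarith)]
    linarith
  · intro q' hq' hlt
    obtain ⟨j, hjS, rfl⟩ := (mem_Pm m).1 hq'
    rw [hdp, pt_norm_sub] at hlt
    have habs := abs_lt.1 hlt
    push_cast at habs
    have hj2k : 2*k+1 ≤ j := by
      have : 2*(k:ℝ) < j := by linarith [habs.2]
      have : 2*k < j := by exact_mod_cast this
      omega
    have hj4m : j < 4*m := by
      have : (j:ℝ) < 4*m := by linarith [habs.1]
      exact_mod_cast this
    rw [mem_S] at hjS
    have hj1 : 1 ≤ j := by omega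
    have hj3 : j ≤ 3*m := by omega
    rw [hdq, dne_blue m hm1 hj1 hj3]
    have hjr : (2*(k:ℝ)+1) ≤ j := by exact_mod_cast hj2k
    have hj3r : (j:ℝ) ≤ 3*m := by exact_mod_cast hj3
    apply le_min
    · linarith
    · linarith

end Construction


/-- For every `m ≥ 8` there is a training set (in some dimension `d ≥ 1`, with two classes)
having at most 4 border points and at most 4 nearest-enemy points, on which MSS selects
at least `m / 4` points. -/
theorem mss_lower_bound :
    ∀ m : ℕ, 8 ≤ m →
    ∃ d : ℕ, 1 ≤ d ∧
    ∃ (P : Finset (EuclideanSpace ℝ (Fin d))) (l : EuclideanSpace ℝ (Fin d) → Bool),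
      (∀ p ∈ P, ∃ q ∈ P, l q ≠ l p) ∧
      {q : EuclideanSpace ℝ (Fin d) | q ∈ P ∧ IsBorder P l q}.ncard ≤ 4 ∧
      {q : EuclideanSpace ℝ (Fin d) | q ∈ P ∧ ∃ p ∈ P, IsNearestEnemy P l p q}.ncard ≤ 4 ∧
      (m : ℝ) / 4 ≤
        ({q : EuclideanSpace ℝ (Fin d) | q ∈ P ∧ ∃ p ∈ P,
            ‖p - q‖ < dne P l p ∧
            ∀ q' ∈ P, ‖p - q'‖ < dne P l p → dne P l q ≤ dne P l q'}.ncard : ℝ) := by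
  intro m hm
  classical
  have hm1 : 1 ≤ m := by omega
  have hfour : ({pt ((0:ℕ):ℝ), pt ((1:ℕ):ℝ), pt ((3*m:ℕ):ℝ), pt ((4*m:ℕ):ℝ)} :
      Set (EuclideanSpace ℝ (Fin 1))).ncard ≤ 4 := by
    refine le_trans (Set.ncard_insert_le _ _) ?_
    refine le_trans (Nat.add_le_add_right (Set.ncard_insert_le _ _) 1) ?_
    refine le_trans (Nat.add_le_add_right (Nat.add_le_add_right (Set.ncard_insert_le _ _) 1) 1) ?_
    simp [Set.ncard_singleton]
  refine ⟨1, le_refl 1, Pm m, lab m, exists_enemy m hm1, ?_, ?_, ?_⟩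
  · refine le_trans (Set.ncard_le_ncard ?_ (Set.toFinite _)) hfour
    rintro x ⟨hx, hb⟩
    simpa [Set.mem_insert_iff] using border_mem m hm1 hx hb
  · refine le_trans (Set.ncard_le_ncard ?_ (Set.toFinite _)) hfour
    rintro x ⟨hx, hb⟩
    simpa [Set.mem_insert_iff] using ne_mem m hm1 hx hb
  · set MSSset := {q : EuclideanSpace ℝ (Fin 1) | q ∈ Pm m ∧ ∃ p ∈ Pm m,
        ‖p - q‖ < dne (Pm m) (lab m) p ∧
        ∀ q' ∈ Pm m, ‖p - q'‖ < dne (Pm m) (lab m) p →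
          dne (Pm m) (lab m) q ≤ dne (Pm m) (lab m) q'} with hMSS
    have hfin : MSSset.Finite :=
      Set.Finite.subset (Pm m).finite_toSet (fun q hq => hq.1)
    set T : Finset (EuclideanSpace ℝ (Fin 1)) :=
      (Finset.range (m/2)).image (fun k : ℕ => pt ((2*k+1:ℕ):ℝ)) with hT
    have hTsub : ↑T ⊆ MSSset := by
      intro x hx
      simp only [hT, Finset.coe_image, Set.mem_image, Finset.mem_coe, Finset.mem_range] at hx
      obtain ⟨k, hk, rfl⟩ := hx
      exact mss_mem m hm hk
    have hinj : Function.Injective (fun k : ℕ => pt ((2*k+1:ℕ):ℝ)) := by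
      intro k1 k2 h
      have h2 := pt_inj h
      have h3 : 2*k1+1 = 2*k2+1 := by exact_mod_cast h2
      omega
    have hTcard : T.card = m/2 := by
      rw [hT, Finset.card_image_of_injective _ hinj, Finset.card_range]
    have h1 : m/2 ≤ MSSset.ncard := by
      rw [← hTcard, ← Set.ncard_coe_finset]
      exact Set.ncard_le_ncard hTsub hfin
    have h3 : ((m/2:ℕ):ℝ) ≤ MSSset.ncard := by exact_mod_cast h1
    have h2 : (m:ℝ) ≤ 4*((m/2:ℕ):ℝ) := by
      have : m ≤ 4*(m/2) := by omega
      exact_mod_cast this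
    linarith
end

section
/- Let P be a training set in EuclideanSpace ℝ (Fin d), and let p₁, …, pₙ be an enumeration of P with d_ne(p₁) ≤ ⋯ ≤ d_ne(pₙ). Define R₀ = ∅ and, for i = 1, …, n, Rᵢ = Rᵢ₋₁ ∪ {pᵢ} if ‖pᵢ − r‖ ≥ d_ne(pᵢ) for every r ∈ Rᵢ₋₁, and Rᵢ = Rᵢ₋₁ otherwise; set RSS = Rₙ. Then RSS is a selective subset of P: for every p ∈ P there exists r ∈ RSS with ‖p − r‖ < d_ne(p). -/
theorem le_of_forall_le_succ_of_le {α : Type*} [Preorder α] {f : ℕ → α} {n : ℕ}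
    (hf : ∀ k < n, f k ≤ f (k + 1)) {a : ℕ} (ha : a ≤ n) : f a ≤ f n :=
  Nat.decreasingInduction (fun k hk ih => (hf k hk).trans ih) le_rfl ha

section NearestEnemy

variable {d : ℕ} {Λ : Type*} {P : Finset (EuclideanSpace ℝ (Fin d))}
  {l : EuclideanSpace ℝ (Fin d) → Λ} {p : EuclideanSpace ℝ (Fin d)}

theorem exists_dne_eq_norm_sub (h : ∃ q ∈ P, l q ≠ l p) :
    ∃ q ∈ P, l q ≠ l p ∧ dne P l p = ‖p - q‖ := by
  set S : Set ℝ := {r : ℝ | ∃ q ∈ P, l q ≠ l p ∧ r = ‖p - q‖}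
  have hfin : S.Finite :=
    (P.finite_toSet.image (fun q => ‖p - q‖)).subset fun r ⟨q, hq, _, hr⟩ => ⟨q, hq, hr.symm⟩
  obtain ⟨q, hq, hlq⟩ := h
  have hne : S.Nonempty := ⟨‖p - q‖, q, hq, hlq, rfl⟩
  exact hne.csInf_mem hfin

theorem dne_pos (h : ∃ q ∈ P, l q ≠ l p) : 0 < dne P l p := by
  obtain ⟨q, -, hlq, hq⟩ := exists_dne_eq_norm_sub h
  have hpq : p ≠ q := fun hpq => hlq (congrArg l hpq.symm)
  rw [hq]
  exact norm_pos_iff.mpr (sub_ne_zero.mpr hpq)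

end NearestEnemy

open Classical in
theorem rss_selective_general {d n : ℕ} {Λ : Type*}
    (P : Finset (EuclideanSpace ℝ (Fin d))) (l : EuclideanSpace ℝ (Fin d) → Λ)
    (hP : ∀ p ∈ P, ∃ q ∈ P, l q ≠ l p)
    (p : Fin n → EuclideanSpace ℝ (Fin d))
    (henum : ∀ x, x ∈ P ↔ ∃ i, p i = x)
    (R : ℕ → Finset (EuclideanSpace ℝ (Fin d)))
    (hadd : ∀ i : Fin n, (∀ r ∈ R i.1, dne P l (p i) ≤ ‖p i - r‖) →
      R (i.1 + 1) = insert (p i) (R i.1))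
    (hskip : ∀ i : Fin n, ¬ (∀ r ∈ R i.1, dne P l (p i) ≤ ‖p i - r‖) →
      R (i.1 + 1) = R i.1) :
    ∀ q ∈ P, ∃ r ∈ R n, ‖q - r‖ < dne P l q := by
  have hstep : ∀ k < n, R k ⊆ R (k + 1) := fun k hk => by
    by_cases hc : ∀ r ∈ R k, dne P l (p ⟨k, hk⟩) ≤ ‖p ⟨k, hk⟩ - r‖
    · exact (hadd ⟨k, hk⟩ hc).symm ▸ Finset.subset_insert _ _
    · exact (hskip ⟨k, hk⟩ hc).symm ▸ subset_rfl
  intro q hq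
  obtain ⟨i, rfl⟩ := (henum q).mp hq
  obtain ⟨r, hr, hlt⟩ : ∃ r ∈ R (i.1 + 1), ‖p i - r‖ < dne P l (p i) := by
    by_cases hc : ∀ r ∈ R i.1, dne P l (p i) ≤ ‖p i - r‖
    · refine ⟨p i, (hadd i hc).symm ▸ Finset.mem_insert_self _ _, ?_⟩
      simpa using dne_pos (hP _ hq)
    · rw [hskip i hc]
      push Not at hc
      exact hc
  exact ⟨r, le_of_forall_le_succ_of_le hstep i.2 hr, hlt⟩

open Classical in
/-- The greedy RSS procedure, run on an enumeration `p₁, …, pₙ` of `P` sorted in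
nondecreasing order of nearest-enemy distance, produces a selective subset of `P`. -/
theorem rss_selective {d n : ℕ} {Λ : Type*}
    (P : Finset (EuclideanSpace ℝ (Fin d))) (l : EuclideanSpace ℝ (Fin d) → Λ)
    (hP : ∀ p ∈ P, ∃ q ∈ P, l q ≠ l p)
    (p : Fin n → EuclideanSpace ℝ (Fin d))
    (hinj : Function.Injective p)
    (henum : ∀ x, x ∈ P ↔ ∃ i, p i = x)
    (hsort : ∀ i j : Fin n, i ≤ j → dne P l (p i) ≤ dne P l (p j))
    (R : ℕ → Finset (EuclideanSpace ℝ (Fin d)))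
    (hR0 : R 0 = ∅)
    (hadd : ∀ i : Fin n, (∀ r ∈ R i.1, dne P l (p i) ≤ ‖p i - r‖) →
      R (i.1 + 1) = insert (p i) (R i.1))
    (hskip : ∀ i : Fin n, ¬ (∀ r ∈ R i.1, dne P l (p i) ≤ ‖p i - r‖) →
      R (i.1 + 1) = R i.1) :
    ∀ q ∈ P, ∃ r ∈ R n, ‖q - r‖ < dne P l q :=
  rss_selective_general P l hP p henum R hadd hskip
end

section
/- Let p ∈ EuclideanSpace ℝ (Fin d) and let S ⊆ EuclideanSpace ℝ (Fin d) be a set with p ∉ S such that for all distinct x, y ∈ S one has ‖x − y‖ ≥ ‖x − p‖ and ‖x − y‖ ≥ ‖y − p‖. Then S is finite and |S| ≤ 3^d. -/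
open Metric MeasureTheory ENNReal RealInnerProductSpace

/-- A finite set of unit vectors that are pairwise at distance at least `1`
has cardinality at most `3 ^ d`. -/
lemma sphere_packing_card_le {d : ℕ} (F : Finset (EuclideanSpace ℝ (Fin d)))
    (hnorm : ∀ u ∈ F, ‖u‖ = 1)
    (hsep : ∀ u ∈ F, ∀ v ∈ F, u ≠ v → 1 ≤ dist u v) :
    F.card ≤ 3 ^ d := by
  set μ := (volume : Measure (EuclideanSpace ℝ (Fin d)))
  have hdisj : (F : Set (EuclideanSpace ℝ (Fin d))).PairwiseDisjoint
      (fun u => ball u (1/2 : ℝ)) := by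
    intro u hu v hv huv
    exact ball_disjoint_ball (by linarith [hsep u hu v hv huv])
  have hsub : (⋃ u ∈ F, ball u (1/2 : ℝ)) ⊆ ball (0 : EuclideanSpace ℝ (Fin d)) (3/2) := by
    intro w hw
    simp only [Set.mem_iUnion] at hw
    obtain ⟨u, hu, hwu⟩ := hw
    rw [mem_ball] at hwu ⊢
    have : dist w (0 : EuclideanSpace ℝ (Fin d)) ≤ dist w u + dist u 0 :=
      dist_triangle w u 0
    have hu1 : dist u (0 : EuclideanSpace ℝ (Fin d)) = 1 := by
      rw [dist_eq_norm, sub_zero]; exact hnorm u hu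
    linarith
  have hball : ∀ x : EuclideanSpace ℝ (Fin d), ∀ r : ℝ, 0 < r →
      μ (ball x r) = ENNReal.ofReal (r ^ d) * μ (ball 0 1) := by
    intro x r hr
    rw [Measure.addHaar_ball_of_pos μ x hr, finrank_euclideanSpace_fin]
  have hsum : μ (⋃ u ∈ F, ball u (1/2 : ℝ)) =
      F.card * (ENNReal.ofReal ((1/2 : ℝ) ^ d) * μ (ball 0 1)) := by
    rw [measure_biUnion_finset hdisj (fun u _ => measurableSet_ball)]
    rw [Finset.sum_congr rfl (fun u _ => hball u (1/2) (by norm_num))]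
    simp [Finset.sum_const, nsmul_eq_mul]
  have hle : (F.card : ℝ≥0∞) * (ENNReal.ofReal ((1/2 : ℝ) ^ d) * μ (ball 0 1)) ≤
      ENNReal.ofReal ((3/2 : ℝ) ^ d) * μ (ball 0 1) := by
    rw [← hsum, ← hball 0 (3/2) (by norm_num)]
    exact measure_mono hsub
  have hV0 : μ (ball (0 : EuclideanSpace ℝ (Fin d)) 1) ≠ 0 :=
    (measure_ball_pos μ 0 one_pos).ne'
  have hVtop : μ (ball (0 : EuclideanSpace ℝ (Fin d)) 1) ≠ ⊤ :=
    measure_ball_lt_top.ne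
  have hc0 : ENNReal.ofReal ((1/2 : ℝ) ^ d) * μ (ball 0 1) ≠ 0 := by
    exact mul_ne_zero (ENNReal.ofReal_pos.mpr (by positivity)).ne' hV0
  have hctop : ENNReal.ofReal ((1/2 : ℝ) ^ d) * μ (ball 0 1) ≠ ⊤ :=
    ENNReal.mul_ne_top ENNReal.ofReal_ne_top hVtop
  have hkey : (F.card : ℝ≥0∞) ≤ (3 ^ d : ℕ) := by
    rw [← ENNReal.mul_le_mul_iff_left hc0 hctop]
    refine hle.trans (le_of_eq ?_)
    rw [← mul_assoc, ← ENNReal.ofReal_natCast, ← ENNReal.ofReal_mul (by positivity)]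
    congr 1
    push_cast
    rw [← mul_pow]
    norm_num
  exact_mod_cast hkey

/-- A set `S` not containing `p`, in which any two distinct points are at least as far from
each other as each of them is from `p`, is finite of cardinality at most `3 ^ d`. -/
theorem packing_around_apex {d : ℕ} (p : EuclideanSpace ℝ (Fin d))
    (S : Set (EuclideanSpace ℝ (Fin d))) (hp : p ∉ S)
    (h : ∀ x ∈ S, ∀ y ∈ S, x ≠ y → ‖x - p‖ ≤ ‖x - y‖ ∧ ‖y - p‖ ≤ ‖x - y‖) :
    S.Finite ∧ S.ncard ≤ 3 ^ d := by
  -- the normalized direction map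
  set u : EuclideanSpace ℝ (Fin d) → EuclideanSpace ℝ (Fin d) :=
    fun x => ‖x - p‖⁻¹ • (x - p) with hu
  have hpos : ∀ x ∈ S, (0 : ℝ) < ‖x - p‖ := by
    intro x hx
    rw [norm_pos_iff, sub_ne_zero]
    rintro rfl; exact hp hx
  have hunorm : ∀ x ∈ S, ‖u x‖ = 1 := by
    intro x hx
    rw [hu]
    simp only [norm_smul, norm_inv, norm_norm]
    field_simp [(hpos x hx).ne']
  -- separation of directions
  have husep : ∀ x ∈ S, ∀ y ∈ S, x ≠ y → 1 ≤ dist (u x) (u y) := by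
    intro x hx y hy hxy
    obtain ⟨hca, hcb⟩ := h x hx y hy hxy
    set a := ‖x - p‖ with ha
    set b := ‖y - p‖ with hb
    set c := ‖x - y‖ with hc
    have hapos : 0 < a := hpos x hx
    have hbpos : 0 < b := hpos y hy
    have hinner : ⟪x - p, y - p⟫ = (a ^ 2 + b ^ 2 - c ^ 2) / 2 := by
      have := norm_sub_sq_real (x - p) (y - p)
      have hxy' : (x - p) - (y - p) = x - y := by abel
      rw [hxy'] at this
      rw [← ha, ← hb, ← hc] at this
      linarith
    have hinnerle : ⟪x - p, y - p⟫ ≤ a * b / 2 := by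
      rw [hinner]
      have h1 : (c - a) * (c - b) ≥ 0 := mul_nonneg (by linarith) (by linarith)
      have h2 : (c - a) * a ≥ 0 := mul_nonneg (by linarith) hapos.le
      have h3 : (c - b) * b ≥ 0 := mul_nonneg (by linarith) hbpos.le
      nlinarith
    have hdistsq : 1 ≤ ‖u x - u y‖ ^ 2 := by
      rw [norm_sub_sq_real, hunorm x hx, hunorm y hy]
      have : ⟪u x, u y⟫ = a⁻¹ * (b⁻¹ * ⟪x - p, y - p⟫) := by
        rw [hu]
        simp only [real_inner_smul_left, real_inner_smul_right, ← ha, ← hb]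
        ring
      rw [this]
      have hab : 0 < a * b := mul_pos hapos hbpos
      have : a⁻¹ * (b⁻¹ * ⟪x - p, y - p⟫) ≤ 1 / 2 := by
        rw [← mul_assoc, ← mul_inv]
        rw [inv_mul_le_iff₀ hab]
        calc ⟪x - p, y - p⟫ ≤ a * b / 2 := hinnerle
          _ = a * b * (1/2) := by ring
      nlinarith
    rw [dist_eq_norm]
    nlinarith [norm_nonneg (u x - u y)]
  -- injectivity on S
  have huinj : ∀ x ∈ S, ∀ y ∈ S, u x = u y → x = y := by
    intro x hx y hy hxy
    by_contra hne
    have := husep x hx y hy hne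
    rw [hxy, dist_self] at this
    linarith
  -- every finite subset of S has card ≤ 3^d
  have hcard : ∀ F : Finset (EuclideanSpace ℝ (Fin d)), ↑F ⊆ S → F.card ≤ 3 ^ d := by
    intro F hFS
    classical
    have himg : (F.image u).card = F.card := by
      apply Finset.card_image_of_injOn
      intro x hx y hy
      exact huinj x (hFS hx) y (hFS hy)
    rw [← himg]
    apply sphere_packing_card_le
    · intro v hv
      obtain ⟨x, hx, rfl⟩ := Finset.mem_image.mp hv
      exact hunorm x (hFS hx)
    · intro v hv w hw hvw
      obtain ⟨x, hx, rfl⟩ := Finset.mem_image.mp hv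
      obtain ⟨y, hy, rfl⟩ := Finset.mem_image.mp hw
      have hxy : x ≠ y := by rintro rfl; exact hvw rfl
      exact husep x (hFS hx) y (hFS hy) hxy
  have hfin : S.Finite := by
    by_contra hinf
    obtain ⟨F, hFS, hFcard⟩ :=
      Set.Infinite.exists_subset_card_eq hinf (3 ^ d + 1)
    have := hcard F hFS
    omega
  refine ⟨hfin, ?_⟩
  rw [Set.ncard_eq_toFinset_card S hfin]
  exact hcard hfin.toFinset (by simp)
end

section
/- Let P be a training set in EuclideanSpace ℝ (Fin d), let RSS be the subset produced by the greedy procedure (process the points of P in nondecreasing order of nearest-enemy distance, adding pᵢ whenever every previously added point r satisfies ‖pᵢ − r‖ ≥ d_ne(pᵢ)), and let κ be the number of points of P that are a nearest enemy of some point of P. Then |RSS| ≤ κ · 3^d. -/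
open Metric MeasureTheory ENNReal in
/-- A `1`-separated set of vectors of norm at most `1` in `ℝ^d` has at most `3 ^ d` elements. -/
theorem my_packing {d : ℕ} (s : Finset (EuclideanSpace ℝ (Fin d)))
    (hs : ∀ c ∈ s, ‖c‖ ≤ 1)
    (h : ∀ c ∈ s, ∀ c' ∈ s, c ≠ c' → 1 ≤ ‖c - c'‖) : s.card ≤ 3 ^ d := by
  let E := EuclideanSpace ℝ (Fin d)
  let μ : Measure E := volume
  let δ : ℝ := (1 : ℝ) / 2
  let ρ : ℝ := (3 : ℝ) / 2
  have ρpos : 0 < ρ := by norm_num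
  set A := ⋃ c ∈ s, ball (c : E) δ with hA
  have D : Set.Pairwise (s : Set E) (Function.onFun Disjoint fun c => ball (c : E) δ) := by
    rintro c hc d' hd hcd
    apply ball_disjoint_ball
    rw [dist_eq_norm]
    convert h c hc d' hd hcd
    norm_num
  have A_subset : A ⊆ ball (0 : E) ρ := by
    refine Set.iUnion₂_subset fun x hx => ?_
    apply ball_subset_ball'
    calc
      δ + dist x 0 ≤ δ + 1 := by rw [dist_zero_right]; exact add_le_add le_rfl (hs x hx)
      _ = 3 / 2 := by norm_num
  have hfr : Module.finrank ℝ E = d := finrank_euclideanSpace_fin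
  have I :
    (s.card : ℝ≥0∞) * ENNReal.ofReal (δ ^ d) * μ (ball 0 1) ≤
      ENNReal.ofReal (ρ ^ d) * μ (ball 0 1) :=
    calc
      (s.card : ℝ≥0∞) * ENNReal.ofReal (δ ^ d) * μ (ball 0 1) = μ A := by
        rw [hA, measure_biUnion_finset D fun c _ => measurableSet_ball]
        have I : (0:ℝ) < δ := by norm_num
        simp only [μ.addHaar_ball_of_pos _ I, hfr]
        simp only [Finset.sum_const, nsmul_eq_mul, mul_assoc]
      _ ≤ μ (ball (0 : E) ρ) := measure_mono A_subset
      _ = ENNReal.ofReal (ρ ^ d) * μ (ball 0 1) := by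
        simp only [μ.addHaar_ball_of_pos _ ρpos, hfr]
  have J : (s.card : ℝ≥0∞) * ENNReal.ofReal (δ ^ d) ≤ ENNReal.ofReal (ρ ^ d) :=
    (ENNReal.mul_le_mul_iff_left (measure_ball_pos _ _ zero_lt_one).ne' measure_ball_lt_top.ne).1 I
  have K : (s.card : ℝ) ≤ (3 : ℝ) ^ d := by
    have := ENNReal.toReal_le_of_le_ofReal (pow_nonneg ρpos.le _) J
    simpa [ρ, δ, div_eq_mul_inv, mul_pow] using this
  exact_mod_cast K

/-- If `u`, `v` are nonzero and farther from each other than from the origin, then the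
corresponding unit vectors are at distance at least `1`. -/
theorem my_unit_sep {d : ℕ} {u v : EuclideanSpace ℝ (Fin d)}
    (hu : u ≠ 0) (hv : v ≠ 0) (h1 : ‖u‖ ≤ ‖u - v‖) (h2 : ‖v‖ ≤ ‖u - v‖) :
    1 ≤ ‖‖u‖⁻¹ • u - ‖v‖⁻¹ • v‖ := by
  have hau : (0:ℝ) < ‖u‖ := norm_pos_iff.mpr hu
  have hav : (0:ℝ) < ‖v‖ := norm_pos_iff.mpr hv
  have e1 : ‖u - v‖ ^ 2 = ‖u‖ ^ 2 - 2 * inner ℝ u v + ‖v‖ ^ 2 := norm_sub_sq_real u v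
  have q1 : ‖u‖ ^ 2 ≤ ‖u - v‖ ^ 2 := by nlinarith [norm_nonneg (u - v)]
  have q2 : ‖v‖ ^ 2 ≤ ‖u - v‖ ^ 2 := by nlinarith [norm_nonneg (u - v)]
  have hi1 : 2 * (inner ℝ u v : ℝ) ≤ ‖v‖ ^ 2 := by nlinarith
  have hi2 : 2 * (inner ℝ u v : ℝ) ≤ ‖u‖ ^ 2 := by nlinarith
  have hiuv : (inner ℝ u v : ℝ) ≤ ‖u‖ * ‖v‖ / 2 := by nlinarith
  have e2 : ‖‖u‖⁻¹ • u - ‖v‖⁻¹ • v‖ ^ 2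
      = ‖‖u‖⁻¹ • u‖ ^ 2 - 2 * inner ℝ (‖u‖⁻¹ • u) (‖v‖⁻¹ • v) + ‖‖v‖⁻¹ • v‖ ^ 2 :=
    norm_sub_sq_real _ _
  have nu : ‖‖u‖⁻¹ • u‖ = 1 := by
    rw [norm_smul]; simp [abs_of_pos (inv_pos.mpr hau), inv_mul_cancel₀ hau.ne']
  have nv : ‖‖v‖⁻¹ • v‖ = 1 := by
    rw [norm_smul]; simp [abs_of_pos (inv_pos.mpr hav), inv_mul_cancel₀ hav.ne']
  have einn : (inner ℝ (‖u‖⁻¹ • u) (‖v‖⁻¹ • v) : ℝ) = ‖u‖⁻¹ * (‖v‖⁻¹ * inner ℝ u v) := by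
    rw [real_inner_smul_left, real_inner_smul_right]
  have hle : (inner ℝ (‖u‖⁻¹ • u) (‖v‖⁻¹ • v) : ℝ) ≤ 1 / 2 := by
    rw [einn]
    calc ‖u‖⁻¹ * (‖v‖⁻¹ * inner ℝ u v) ≤ ‖u‖⁻¹ * (‖v‖⁻¹ * (‖u‖ * ‖v‖ / 2)) := by
          gcongr
      _ = 1/2 := by field_simp
  have sq1 : 1 ≤ ‖‖u‖⁻¹ • u - ‖v‖⁻¹ • v‖ ^ 2 := by
    rw [e2, nu, nv]; nlinarith
  nlinarith [norm_nonneg (‖u‖⁻¹ • u - ‖v‖⁻¹ • v)]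

open Classical in
/-- Every point with an enemy has a nearest enemy, attaining the nearest-enemy distance. -/
theorem my_dne_exists {d : ℕ} {Λ : Type*} (P : Finset (EuclideanSpace ℝ (Fin d)))
    (l : EuclideanSpace ℝ (Fin d) → Λ) {x : EuclideanSpace ℝ (Fin d)}
    (hx : ∃ q ∈ P, l q ≠ l x) :
    ∃ q, IsNearestEnemy P l x q ∧ dne P l x = ‖x - q‖ := by
  classical
  set T : Finset ℝ := (P.filter fun q => l q ≠ l x).image fun q => ‖x - q‖ with hT
  obtain ⟨q0, hq0, hq0l⟩ := hx
  have hTne : T.Nonempty := ⟨‖x - q0‖, by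
    simp only [hT, Finset.mem_image, Finset.mem_filter]; exact ⟨q0, ⟨hq0, hq0l⟩, rfl⟩⟩
  have hset : {r : ℝ | ∃ q ∈ P, l q ≠ l x ∧ r = ‖x - q‖} = ↑T := by
    ext r
    simp only [hT, Set.mem_setOf_eq, Finset.coe_image, Set.mem_image, Finset.mem_coe,
      Finset.mem_filter]
    constructor
    · rintro ⟨q, hq, hql, rfl⟩; exact ⟨q, ⟨hq, hql⟩, rfl⟩
    · rintro ⟨q, ⟨hq, hql⟩, rfl⟩; exact ⟨q, hq, hql, rfl⟩
  have hmin : dne P l x = T.min' hTne := by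
    rw [dne, hset, hTne.csInf_eq_min']
  obtain ⟨q, hqmem, hqeq⟩ : ∃ q, (q ∈ P ∧ l q ≠ l x) ∧ ‖x - q‖ = T.min' hTne := by
    have := T.min'_mem hTne
    simp only [hT, Finset.mem_image, Finset.mem_filter] at this
    obtain ⟨q, hq, hqe⟩ := this
    exact ⟨q, hq, hqe⟩
  refine ⟨q, ⟨hqmem.1, hqmem.2, fun q' hq' hq'l => ?_⟩, by rw [hmin, hqeq]⟩
  rw [hqeq]
  exact T.min'_le _ (by
    simp only [hT, Finset.mem_image, Finset.mem_filter]; exact ⟨q', ⟨hq', hq'l⟩, rfl⟩)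

open Classical in
/-- The subset produced by the greedy RSS procedure has size at most `κ * 3 ^ d`, where
`κ` is the number of points of `P` that are a nearest enemy of some point of `P`. -/
theorem rss_size_bound {d n : ℕ} {Λ : Type*}
    (P : Finset (EuclideanSpace ℝ (Fin d))) (l : EuclideanSpace ℝ (Fin d) → Λ)
    (hP : ∀ p ∈ P, ∃ q ∈ P, l q ≠ l p)
    (p : Fin n → EuclideanSpace ℝ (Fin d))
    (hinj : Function.Injective p)
    (henum : ∀ x, x ∈ P ↔ ∃ i, p i = x)
    (hsort : ∀ i j : Fin n, i ≤ j → dne P l (p i) ≤ dne P l (p j))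
    (R : ℕ → Finset (EuclideanSpace ℝ (Fin d)))
    (hR0 : R 0 = ∅)
    (hadd : ∀ i : Fin n, (∀ r ∈ R i.1, dne P l (p i) ≤ ‖p i - r‖) →
      R (i.1 + 1) = insert (p i) (R i.1))
    (hskip : ∀ i : Fin n, ¬ (∀ r ∈ R i.1, dne P l (p i) ≤ ‖p i - r‖) →
      R (i.1 + 1) = R i.1) :
    (R n).card ≤
      {q : EuclideanSpace ℝ (Fin d) | q ∈ P ∧ ∃ p' ∈ P, IsNearestEnemy P l p' q}.ncard
        * 3 ^ d := by
  classical
  have hdne : ∀ x ∈ P, ∃ q, IsNearestEnemy P l x q ∧ dne P l x = ‖x - q‖ :=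
    fun x hx => my_dne_exists P l (hP x hx)
  choose! f hf1 hf2 using hdne
  -- key invariant of the greedy procedure
  have key : ∀ k, k ≤ n → (∀ x ∈ R k, ∃ i : Fin n, i.1 < k ∧ p i = x) ∧
      (∀ x ∈ R k, ∀ y ∈ R k, x ≠ y → dne P l x ≤ ‖x - y‖) := by
    intro k
    induction k with
    | zero => intro _; simp [hR0]
    | succ k ih =>
      intro hk1
      have hk : k < n := hk1
      have ihk := ih (Nat.le_of_lt hk1)
      set i : Fin n := ⟨k, hk⟩ with hi
      by_cases hc : ∀ r ∈ R k, dne P l (p i) ≤ ‖p i - r‖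
      · have hRk : R (k + 1) = insert (p i) (R k) := hadd i hc
        constructor
        · intro x hx
          rw [hRk, Finset.mem_insert] at hx
          rcases hx with rfl | hx
          · exact ⟨i, Nat.lt_succ_self k, rfl⟩
          · obtain ⟨j, hj, hje⟩ := ihk.1 x hx
            exact ⟨j, hj.trans (Nat.lt_succ_self k), hje⟩
        · intro x hx y hy hxy
          rw [hRk, Finset.mem_insert] at hx hy
          rcases hx with rfl | hx
          · rcases hy with rfl | hy
            · exact absurd rfl hxy
            · exact hc y hy
          · rcases hy with rfl | hy
            · obtain ⟨j, hj, hje⟩ := ihk.1 x hx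
              have hji : j ≤ i := by
                rw [Fin.le_def]
                exact Nat.le_of_lt hj
              have h1 : dne P l x ≤ dne P l (p i) := by
                rw [← hje]; exact hsort j i hji
              calc dne P l x ≤ dne P l (p i) := h1
                _ ≤ ‖p i - x‖ := hc x hx
                _ = ‖x - p i‖ := norm_sub_rev _ _
            · exact ihk.2 x hx y hy hxy
      · rw [hskip i hc]
        refine ⟨fun x hx => ?_, ihk.2⟩
        obtain ⟨j, hj, hje⟩ := ihk.1 x hx
        exact ⟨j, Nat.lt_succ_of_lt hj, hje⟩
  have hRP : ∀ x ∈ R n, x ∈ P := by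
    intro x hx
    obtain ⟨i, _, rfl⟩ := (key n le_rfl).1 x hx
    exact (henum _).mpr ⟨i, rfl⟩
  have sep := (key n le_rfl).2
  have hdpos : ∀ x ∈ P, 0 < dne P l x := by
    intro x hx
    rw [hf2 x hx]
    have hne : x ≠ f x := fun h => (hf1 x hx).2.1 (congrArg l h.symm)
    exact norm_pos_iff.mpr (sub_ne_zero.mpr hne)
  set Kf : Finset (EuclideanSpace ℝ (Fin d)) :=
    P.filter (fun q => ∃ p' ∈ P, IsNearestEnemy P l p' q) with hKf
  have hKset : {q : EuclideanSpace ℝ (Fin d) | q ∈ P ∧ ∃ p' ∈ P, IsNearestEnemy P l p' q}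
      = ↑Kf := by
    ext q; simp [hKf, Finset.mem_filter]
  rw [hKset, Set.ncard_coe_finset]
  have hmaps : ∀ x ∈ R n, f x ∈ Kf := by
    intro x hx
    have hxP := hRP x hx
    simp only [hKf, Finset.mem_filter]
    exact ⟨(hf1 x hxP).1, x, hxP, hf1 x hxP⟩
  rw [Finset.card_eq_sum_card_fiberwise hmaps]
  have hbound : ∀ q ∈ Kf, ((R n).filter fun x => f x = q).card ≤ 3 ^ d := by
    intro q _
    set F := (R n).filter fun x => f x = q with hF
    set g : EuclideanSpace ℝ (Fin d) → EuclideanSpace ℝ (Fin d) :=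
      fun x => ‖x - q‖⁻¹ • (x - q) with hg
    have hmemF : ∀ x ∈ F, x ∈ R n ∧ x ∈ P ∧ ‖x - q‖ = dne P l x := by
      intro x hx
      simp only [hF, Finset.mem_filter] at hx
      obtain ⟨hxR, hxq⟩ := hx
      have hxP := hRP x hxR
      exact ⟨hxR, hxP, by rw [← hxq]; exact (hf2 x hxP).symm⟩
    have hne0 : ∀ x ∈ F, x - q ≠ 0 := by
      intro x hx
      obtain ⟨hxR, hxP, hxn⟩ := hmemF x hx
      rw [← norm_pos_iff, hxn] at *
      exact hdpos x hxP
    have hsepg : ∀ x ∈ F, ∀ y ∈ F, x ≠ y → 1 ≤ ‖g x - g y‖ := by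
      intro x hx y hy hxy
      obtain ⟨hxR, hxP, hxn⟩ := hmemF x hx
      obtain ⟨hyR, hyP, hyn⟩ := hmemF y hy
      have hd : (x - q) - (y - q) = x - y := by abel
      apply my_unit_sep (hne0 x hx) (hne0 y hy)
      · rw [hd, hxn]; exact sep x hxR y hyR hxy
      · rw [hd, hyn, norm_sub_rev x y]
        exact sep y hyR x hxR hxy.symm
    have hinjF : Set.InjOn g ↑F := by
      intro x hx y hy hgeq
      by_contra hne
      have h1 := hsepg x hx y hy hne
      rw [hgeq, sub_self, norm_zero] at h1
      linarith
    calc F.card = (F.image g).card := (Finset.card_image_of_injOn hinjF).symm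
      _ ≤ 3 ^ d := by
        apply my_packing
        · intro c hc
          simp only [Finset.mem_image] at hc
          obtain ⟨x, hx, rfl⟩ := hc
          have h0 : (0:ℝ) < ‖x - q‖ := norm_pos_iff.mpr (hne0 x hx)
          simp only [hg, norm_smul]
          rw [Real.norm_eq_abs, abs_of_pos (inv_pos.mpr h0), inv_mul_cancel₀ h0.ne']
        · intro c hc c' hc' hcc
          simp only [Finset.mem_image] at hc hc'
          obtain ⟨x, hx, rfl⟩ := hc
          obtain ⟨y, hy, rfl⟩ := hc'
          exact hsepg x hx y hy (fun h => hcc (by rw [h]))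
  calc ∑ q ∈ Kf, ((R n).filter fun x => f x = q).card
      ≤ ∑ _q ∈ Kf, 3 ^ d := Finset.sum_le_sum hbound
    _ = Kf.card * 3 ^ d := by simp [Finset.sum_const, mul_comm]
end

section
/- There exists a constant c > 1 such that for every d ≥ 2 the following holds: if R is a finite subset of the unit sphere { x ∈ EuclideanSpace ℝ (Fin d) : ‖x‖ = 1 } with the property that for every x with ‖x‖ = 1 there exists r ∈ R with ‖x − r‖ < 1, then |R| ≥ c^(d−1). -/
/-!
If every unit vector is within distance `1` of some `r ∈ R`, then every point `t • x` with
`‖x‖ = 1`, `0 ≤ t ≤ 1` lies within `√3 / 2` of `r / 2` for that `r`: the balls of radius `√3 / 2`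
around the points `r / 2` cover the unit ball. Comparing volumes gives
`|R| ≥ (2 / √3) ^ d ≥ (2 / √3) ^ (d - 1)`.
-/

open Metric MeasureTheory

section

variable {E : Type*} [NormedAddCommGroup E] [InnerProductSpace ℝ E]

theorem norm_smul_sub_half_smul_le {x r : E} (hx : ‖x‖ = 1) (hr : ‖r‖ = 1) (hxr : ‖x - r‖ ≤ 1)
    {t : ℝ} (ht₀ : 0 ≤ t) (ht₁ : t ≤ 1) : ‖t • x - (2⁻¹ : ℝ) • r‖ ≤ √3 / 2 := by
  have hinner : 2⁻¹ ≤ inner ℝ x r := by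
    have h := norm_sub_sq_real x r
    rw [hx, hr] at h
    nlinarith [norm_nonneg (x - r)]
  -- `‖t • x - r / 2‖ ^ 2 = t ^ 2 - t ⟪x, r⟫ + 1 / 4 ≤ t ^ 2 - t / 2 + 1 / 4 ≤ 3 / 4`
  have hsq : ‖t • x - (2⁻¹ : ℝ) • r‖ ^ 2 ≤ (√3 / 2) ^ 2 := by
    rw [norm_sub_sq_real, norm_smul, norm_smul, real_inner_smul_left, real_inner_smul_right,
      hx, hr, div_pow, Real.sq_sqrt zero_le_three, Real.norm_of_nonneg ht₀]
    norm_num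
    nlinarith
  exact (pow_le_pow_iff_left₀ (norm_nonneg _) (by positivity) two_ne_zero).mp hsq

theorem exists_norm_eq_one_smul_eq [Nontrivial E] (y : E) : ∃ x : E, ‖x‖ = 1 ∧ ‖y‖ • x = y := by
  rcases eq_or_ne y 0 with rfl | hy
  · obtain ⟨x, hx⟩ := exists_norm_eq E zero_le_one
    exact ⟨x, hx, by simp⟩
  · exact ⟨NormedSpace.normalize y, NormedSpace.norm_normalize hy, NormedSpace.norm_smul_normalize y⟩

theorem closedBall_subset_biUnion_closedBall_half_smul [Nontrivial E] {R : Finset E}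
    (hR : ∀ r ∈ R, ‖r‖ = 1) (hcov : ∀ x : E, ‖x‖ = 1 → ∃ r ∈ R, ‖x - r‖ ≤ 1) :
    closedBall (0 : E) 1 ⊆ ⋃ r ∈ R, closedBall ((2⁻¹ : ℝ) • r) (√3 / 2) := by
  intro y hy
  rw [mem_closedBall_zero_iff] at hy
  obtain ⟨x, hx, hxy⟩ := exists_norm_eq_one_smul_eq y
  obtain ⟨r, hrR, hxr⟩ := hcov x hx
  refine Set.mem_biUnion hrR ?_
  rw [mem_closedBall, dist_eq_norm, ← hxy]
  exact norm_smul_sub_half_smul_le hx (hR r hrR) hxr (norm_nonneg _) hy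

end

theorem one_le_card_mul_pow_finrank_of_closedBall_subset {E ι : Type*} [NormedAddCommGroup E]
    [NormedSpace ℝ E] [FiniteDimensional ℝ E] {s : Finset ι} {c : ι → E} {ρ : ℝ} (hρ : 0 ≤ ρ)
    (hsub : closedBall (0 : E) 1 ⊆ ⋃ i ∈ s, closedBall (c i) ρ) :
    1 ≤ s.card * ρ ^ Module.finrank ℝ E := by
  borelize E
  set μ : Measure E := Measure.addHaar
  have hball₀ : μ (ball 0 1) ≠ 0 := (measure_ball_pos μ 0 one_pos).ne'
  have hball_top : μ (ball 0 1) ≠ ⊤ := measure_ball_lt_top.ne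
  have hμ : μ (closedBall 0 1) ≤ s.card * μ (closedBall 0 ρ) := calc
    μ (closedBall 0 1) ≤ μ (⋃ i ∈ s, closedBall (c i) ρ) := measure_mono hsub
    _ ≤ ∑ i ∈ s, μ (closedBall (c i) ρ) := measure_biUnion_finset_le s _
    _ = s.card * μ (closedBall 0 ρ) := by
      simp only [Measure.addHaar_closedBall μ _ hρ, Finset.sum_const, nsmul_eq_mul]
  rw [Measure.addHaar_closedBall μ _ hρ, Measure.addHaar_closedBall μ _ zero_le_one, ← mul_assoc,
    ENNReal.mul_le_mul_iff_left hball₀ hball_top, ← ENNReal.ofReal_natCast,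
    ← ENNReal.ofReal_mul (Nat.cast_nonneg _), ENNReal.ofReal_le_ofReal_iff (by positivity)] at hμ
  simpa using hμ

/-- There is a constant `c > 1` such that, for every dimension `d ≥ 2`, any finite subset `R`
of the unit sphere of `EuclideanSpace ℝ (Fin d)` such that every point of the unit sphere is
within distance strictly less than `1` of some point of `R` satisfies `|R| ≥ c ^ (d - 1)`. -/
theorem sphere_cap_cover_lower_bound :
    ∃ c : ℝ, 1 < c ∧ ∀ d : ℕ, 2 ≤ d →
      ∀ R : Finset (EuclideanSpace ℝ (Fin d)),
        (∀ r ∈ R, ‖r‖ = 1) →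
        (∀ x : EuclideanSpace ℝ (Fin d), ‖x‖ = 1 → ∃ r ∈ R, ‖x - r‖ < 1) →
        c ^ (d - 1) ≤ (R.card : ℝ) := by
  have hρ₀ : 0 < √3 / 2 := by positivity
  have hρ₁ : √3 / 2 < 1 := by
    rw [div_lt_one two_pos, Real.sqrt_lt' two_pos]
    norm_num
  refine ⟨(√3 / 2)⁻¹, one_lt_inv₀ hρ₀ |>.mpr hρ₁, fun d hd R hR hcov => ?_⟩
  have : Nontrivial (EuclideanSpace ℝ (Fin d)) := by
    have : Nonempty (Fin d) := ⟨⟨0, by omega⟩⟩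
    infer_instance
  have hcard := one_le_card_mul_pow_finrank_of_closedBall_subset hρ₀.le
    (closedBall_subset_biUnion_closedBall_half_smul hR fun x hx =>
      (hcov x hx).imp fun _ ⟨hr, hxr⟩ => ⟨hr, hxr.le⟩)
  rw [finrank_euclideanSpace_fin] at hcard
  calc (√3 / 2)⁻¹ ^ (d - 1) ≤ (√3 / 2)⁻¹ ^ d :=
        pow_le_pow_right₀ (one_le_inv₀ hρ₀ |>.mpr hρ₁.le) (Nat.sub_le d 1)
    _ = ((√3 / 2) ^ d)⁻¹ := inv_pow _ _
    _ ≤ R.card := (inv_le_iff_one_le_mul₀ (by positivity)).mpr hcard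
end

section
/- There exists a constant c > 1 such that for every d ≥ 2 and every integer m ≥ 1 there is a training set P in EuclideanSpace ℝ (Fin d) with two classes, having at most 2m points that are a nearest enemy of some point of P, such that every consistent subset of P has cardinality at least m · c^(d−1). -/
open Finset

noncomputable section
namespace CSLB

abbrev E (n : ℕ) := EuclideanSpace ℝ (Fin (n + 2))

local instance (n : ℕ) : DecidableEq (E n) := Classical.decEq _

def pt {n : ℕ} (x y : ℝ) (z : Fin n → ℝ) : E n := WithLp.toLp 2 (Fin.cons x (Fin.cons y z))

def dsq {n : ℕ} (p q : E n) : ℝ := ∑ i, (p i - q i) ^ 2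

lemma dsq_eq {n : ℕ} (p q : E n) : dsq p q = ‖p - q‖ ^ 2 := by
  rw [EuclideanSpace.norm_eq]
  rw [Real.sq_sqrt (by positivity)]
  unfold dsq
  congr 1
  ext i
  simp [Real.norm_eq_abs, sq_abs]

lemma dsq_nonneg {n : ℕ} (p q : E n) : 0 ≤ dsq p q := by
  rw [dsq_eq]; positivity

lemma norm_lt_iff {n : ℕ} (p q r s : E n) : ‖p - q‖ < ‖r - s‖ ↔ dsq p q < dsq r s := by
  rw [dsq_eq, dsq_eq]
  constructor
  · intro h; exact pow_lt_pow_left₀ h (norm_nonneg _) (by norm_num)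
  · intro h
    by_contra hc
    push_neg at hc
    exact absurd (pow_le_pow_left₀ (norm_nonneg _) hc 2) (not_le.mpr h)

lemma norm_le_iff {n : ℕ} (p q r s : E n) : ‖p - q‖ ≤ ‖r - s‖ ↔ dsq p q ≤ dsq r s := by
  rw [← not_lt, ← not_lt, not_iff_not, norm_lt_iff]

lemma ne_of_dsq_pos {n : ℕ} {p q : E n} (h : 0 < dsq p q) : p ≠ q := by
  intro he
  rw [he, dsq_eq, sub_self] at h
  simp at h

lemma dsq_pt {n : ℕ} (x y x' y' : ℝ) (z z' : Fin n → ℝ) :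
    dsq (pt x y z) (pt x' y' z') = (x - x') ^ 2 + (y - y') ^ 2 + ∑ t, (z t - z' t) ^ 2 := by
  unfold dsq pt
  rw [Fin.sum_univ_succ, Fin.sum_univ_succ]
  simp [PiLp.sub_apply, pt]
  ring

/-! ### parameters -/

variable (n m : ℕ)

def SS : ℝ := 64 * m * (n + 2)

def tau : ℝ := 1 / (4 * m * SS n m)

def aa (j : ℕ) : ℝ := SS n m * j

variable {n m}

section params
variable (hm : 1 ≤ m)
include hm

lemma m_pos : (0:ℝ) < m := by exact_mod_cast hm

lemma S_pos : 0 < SS n m := by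
  have := m_pos hm; unfold SS; positivity

lemma S_ge : 128 ≤ SS n m := by
  have h1 : (1:ℝ) ≤ m := by exact_mod_cast hm
  have h2 : (0:ℝ) ≤ n := Nat.cast_nonneg n
  unfold SS; nlinarith

lemma tau_pos : 0 < tau n m := by
  have := S_pos (n := n) hm; have := m_pos hm
  unfold tau; positivity

lemma tau_id : tau n m * (4 * m * SS n m) = 1 := by
  have := S_pos (n := n) hm; have := m_pos hm
  unfold tau; field_simp

lemma tau_le : tau n m ≤ 1/4 := by
  have hS := S_pos (n := n) hm
  have hM := m_pos hm
  have hid := tau_id (n := n) hm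
  have hτ := tau_pos (n := n) hm
  have h4 : (4:ℝ) ≤ 4 * m * SS n m := by
    nlinarith [mul_le_mul (S_ge (n := n) hm) (show (1:ℝ) ≤ m by exact_mod_cast hm)
      zero_le_one (le_of_lt hS)]
  nlinarith

lemma tauS : tau n m * (SS n m)^2 = 16 * (n + 2) := by
  have := S_pos (n := n) hm; have := m_pos hm
  unfold tau SS
  field_simp
  ring

lemma aa_nonneg (j : ℕ) : 0 ≤ aa n m j := by
  have := S_pos (n := n) hm; unfold aa; positivity

lemma aa_le {j : ℕ} (hj : j ≤ m) : aa n m j ≤ SS n m * m := by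
  have := S_pos (n := n) hm
  unfold aa
  have : (j:ℝ) ≤ m := by exact_mod_cast hj
  nlinarith

lemma prod_le {j k : ℕ} (hj : j ≤ m) (hk : k ≤ m) :
    tau n m ^ 2 * (4 * aa n m j * aa n m k + 1) ≤ 5/16 := by
  have hS := S_pos (n := n) hm
  have hM := m_pos hm
  have hid := tau_id (n := n) hm
  have hτ := tau_pos (n := n) hm
  have hτ4 := tau_le (n := n) hm
  have h1 := aa_nonneg (n := n) (m := m) hm j
  have h2 := aa_nonneg (n := n) (m := m) hm k
  have h3 := aa_le (n := n) hm hj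
  have h4 := aa_le (n := n) hm hk
  have key : tau n m * (SS n m * m) = 1/4 := by nlinarith
  nlinarith [sq_nonneg (tau n m), mul_le_mul h3 h4 h2 (by positivity : (0:ℝ) ≤ SS n m * m)]

lemma w_pos (j : ℕ) : 0 < tau n m ^ 2 * (4 * aa n m j ^ 2 + 1) := by
  have hτ := tau_pos (n := n) hm
  have h1 := aa_nonneg (n := n) (m := m) hm j
  nlinarith

lemma theta_prod_le {j k : ℕ} (hj : j ≤ m) (hk : k ≤ m) {θ₁ θ₂ : ℝ}
    (h1 : 0 ≤ θ₁) (h2 : θ₁ ≤ 2 * tau n m) (h3 : 0 ≤ θ₂) (h4 : θ₂ ≤ 2 * tau n m) :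
    θ₁ * θ₂ * (4 * aa n m j * aa n m k + 1) ≤ 5/4 := by
  have hp := prod_le (n := n) hm hj hk
  have h5 := aa_nonneg (n := n) (m := m) hm j
  have h6 := aa_nonneg (n := n) (m := m) hm k
  have hpos : (0:ℝ) < 4 * aa n m j * aa n m k + 1 := by nlinarith
  have : θ₁ * θ₂ ≤ 4 * tau n m ^ 2 := by nlinarith [tau_pos (n := n) hm]
  nlinarith

lemma two_theta_aa_le {j : ℕ} (hj : j ≤ m) {θ : ℝ} (h1 : 0 ≤ θ) (h2 : θ ≤ 2 * tau n m) :
    2 * θ * aa n m j ≤ 1 := by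
  have hS := S_pos (n := n) hm
  have hM := m_pos hm
  have hid := tau_id (n := n) hm
  have ha := aa_nonneg (n := n) (m := m) hm j
  have hb := aa_le (n := n) hm hj
  have hτ := tau_pos (n := n) hm
  nlinarith

end params

/-! ### points -/

variable (n m)

def ptJ (j : ℕ) (θ : ℝ) (z : Fin n → ℝ) : E n :=
  pt (aa n m j * (1 + 2*θ)) ((aa n m j)^2 - θ) z

variable {n m}

lemma dsq_ptJ (j k : ℕ) (θ₁ θ₂ : ℝ) (z₁ z₂ : Fin n → ℝ) :
    dsq (ptJ n m j θ₁ z₁) (ptJ n m k θ₂ z₂) =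
      (aa n m j * (1 + 2*θ₁) - aa n m k * (1 + 2*θ₂))^2
      + ((aa n m j)^2 - θ₁ - ((aa n m k)^2 - θ₂))^2 + ∑ t, (z₁ t - z₂ t)^2 := by
  unfold ptJ
  rw [dsq_pt]

lemma dsq_same (j : ℕ) (θ₁ θ₂ : ℝ) (z₁ z₂ : Fin n → ℝ) :
    dsq (ptJ n m j θ₁ z₁) (ptJ n m j θ₂ z₂) =
      (θ₁ - θ₂)^2 * (4 * (aa n m j)^2 + 1) + ∑ t, (z₁ t - z₂ t)^2 := by
  rw [dsq_ptJ]
  have h : (aa n m j * (1 + 2*θ₁) - aa n m j * (1 + 2*θ₂))^2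
      + ((aa n m j)^2 - θ₁ - ((aa n m j)^2 - θ₂))^2
      = (θ₁ - θ₂)^2 * (4 * (aa n m j)^2 + 1) := by ring
  linarith

section geom
variable (hm : 1 ≤ m)
include hm

lemma zsum_le {z₁ z₂ : Fin n → ℝ} (h1 : ∀ t, |z₁ t| ≤ 1) (h2 : ∀ t, |z₂ t| ≤ 1) :
    ∑ t, (z₁ t - z₂ t)^2 ≤ 4 * n := by
  calc ∑ t, (z₁ t - z₂ t)^2 ≤ ∑ _t : Fin n, (4:ℝ) := by
        apply Finset.sum_le_sum
        intro t _
        have a1 := abs_le.mp (h1 t); have a2 := abs_le.mp (h2 t)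
        nlinarith [a1.1, a1.2, a2.1, a2.2]
    _ = 4 * n := by simp [mul_comm]

omit hm in
lemma zsum_nonneg (z₁ z₂ : Fin n → ℝ) : 0 ≤ ∑ t, (z₁ t - z₂ t)^2 :=
  Finset.sum_nonneg fun t _ => sq_nonneg _

/-- any same-copy squared distance is at most `5/4 + 4n`. -/
lemma same_copy_le {j : ℕ} (hj : j ≤ m) {θ₁ θ₂ : ℝ} {z₁ z₂ : Fin n → ℝ}
    (ha : 0 ≤ θ₁) (hb : θ₁ ≤ 2 * tau n m) (hc : 0 ≤ θ₂) (hd : θ₂ ≤ 2 * tau n m)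
    (h1 : ∀ t, |z₁ t| ≤ 1) (h2 : ∀ t, |z₂ t| ≤ 1) :
    dsq (ptJ n m j θ₁ z₁) (ptJ n m j θ₂ z₂) ≤ 5/4 + 4 * n := by
  rw [dsq_same]
  have hz := zsum_le (n := n) hm h1 h2
  have hp := prod_le (n := n) hm hj hj
  have ha2 := aa_nonneg (n := n) (m := m) hm j
  have hpos : (0:ℝ) < 4 * (aa n m j)^2 + 1 := by positivity
  have hth : (θ₁ - θ₂)^2 ≤ 4 * tau n m ^ 2 := by nlinarith [tau_pos (n := n) hm]
  have : (θ₁ - θ₂)^2 * (4 * (aa n m j)^2 + 1) ≤ 4 * tau n m ^2 * (4 * (aa n m j)^2 + 1) := by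
    apply mul_le_mul_of_nonneg_right hth (le_of_lt hpos)
  nlinarith [prod_le (n := n) hm hj hj]

/-- any cross-copy squared distance is at least `(S-2)^2`. -/
lemma cross_far {j k : ℕ} (hj : j ≤ m) (hk : k ≤ m) (hjk : j ≠ k) {θ₁ θ₂ : ℝ}
    {z₁ z₂ : Fin n → ℝ}
    (ha : 0 ≤ θ₁) (hb : θ₁ ≤ 2 * tau n m) (hc : 0 ≤ θ₂) (hd : θ₂ ≤ 2 * tau n m) :
    (SS n m - 2)^2 ≤ dsq (ptJ n m j θ₁ z₁) (ptJ n m k θ₂ z₂) := by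
  rw [dsq_ptJ]
  have b1 := two_theta_aa_le (n := n) hm hj ha hb
  have b2 := two_theta_aa_le (n := n) hm hk hc hd
  have b3 : 0 ≤ 2 * θ₁ * aa n m j := by
    have := aa_nonneg (n := n) (m := m) hm j; positivity
  have b4 : 0 ≤ 2 * θ₂ * aa n m k := by
    have := aa_nonneg (n := n) (m := m) hm k; positivity
  have hS := S_pos (n := n) hm
  have hS2 : (0:ℝ) ≤ SS n m - 2 := by nlinarith [S_ge (n := n) hm]
  have hdiff : SS n m ≤ |aa n m j - aa n m k| := by
    unfold aa
    rw [← mul_sub, abs_mul, abs_of_pos hS]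
    have h1 : (1:ℝ) ≤ |(j:ℝ) - (k:ℝ)| := by
      rcases hjk.lt_or_gt with h | h
      · have h2 : (j:ℝ) + 1 ≤ (k:ℝ) := by exact_mod_cast Nat.succ_le_of_lt h
        exact le_abs.mpr (Or.inr (by linarith))
      · have h2 : (k:ℝ) + 1 ≤ (j:ℝ) := by exact_mod_cast Nat.succ_le_of_lt h
        exact le_abs.mpr (Or.inl (by linarith))
    nlinarith [mul_le_mul_of_nonneg_left h1 (le_of_lt hS)]
  set A := aa n m j - aa n m k with hA
  set B := 2 * θ₁ * aa n m j - 2 * θ₂ * aa n m k with hB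
  have e1 : aa n m j * (1 + 2*θ₁) - aa n m k * (1 + 2*θ₂) = A + B := by
    rw [hA, hB]; ring
  have hfirst : (SS n m - 2)^2 ≤ (A + B)^2 := by
    rcases le_abs.mp hdiff with h | h
    · have h5 : SS n m - 2 ≤ A + B := by linarith
      exact pow_le_pow_left₀ hS2 h5 2
    · have h5 : SS n m - 2 ≤ -(A + B) := by linarith
      have := pow_le_pow_left₀ hS2 h5 2
      nlinarith
  rw [e1]
  linarith [sq_nonneg ((aa n m j)^2 - θ₁ - ((aa n m k)^2 - θ₂)), zsum_nonneg z₁ z₂, hfirst]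

lemma cross_gt : 5/4 + 4 * (n:ℝ) < (SS n m - 2)^2 := by
  have h1 : (64:ℝ) * (n + 2) ≤ SS n m := by
    unfold SS
    have : (1:ℝ) ≤ m := by exact_mod_cast hm
    nlinarith [Nat.cast_nonneg (α := ℝ) n]
  nlinarith [Nat.cast_nonneg (α := ℝ) n]

/-- Blocking: for a point `p` in copy `k` and a blue point `r` of copy `j ≠ k`,
the center of copy `j` is at least as close to `p` as `r` is. -/
lemma blocking {j k : ℕ} (hj : j ≤ m) (hk : k ≤ m) (hjk : j ≠ k) {θ₁ θ₂ : ℝ}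
    {z₁ z₂ : Fin n → ℝ}
    (ha : 0 ≤ θ₁) (hb : θ₁ ≤ 2 * tau n m) (hc : tau n m / 2 ≤ θ₂) (hd : θ₂ ≤ 2 * tau n m)
    (h1 : ∀ t, |z₁ t| ≤ 1) (h2 : ∀ t, |z₂ t| ≤ 1) :
    dsq (ptJ n m k θ₁ z₁) (ptJ n m j 0 0) ≤ dsq (ptJ n m k θ₁ z₁) (ptJ n m j θ₂ z₂) := by
  rw [dsq_ptJ, dsq_ptJ]
  simp only [Pi.zero_apply]
  have hzz : -(2 * (n:ℝ)) ≤ ∑ t, (z₁ t - z₂ t)^2 - ∑ t, (z₁ t - (0:ℝ))^2 := by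
    rw [← Finset.sum_sub_distrib]
    calc (-(2 * (n:ℝ))) = ∑ _t : Fin n, (-2 : ℝ) := by simp [mul_comm]
      _ ≤ ∑ t, ((z₁ t - z₂ t)^2 - (z₁ t - 0)^2) := by
          apply Finset.sum_le_sum
          intro t _
          have a1 := abs_le.mp (h1 t); have a2 := abs_le.mp (h2 t)
          nlinarith [a1.1, a1.2, a2.1, a2.2, sq_nonneg (z₂ t)]
  have hτpos := tau_pos (n := n) hm
  have hθ₂pos : 0 < θ₂ := by linarith
  have hdiffsq : (SS n m)^2 ≤ (aa n m k - aa n m j)^2 := by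
    unfold aa
    have hjk1 : (1:ℝ) ≤ ((k:ℝ) - j)^2 := by
      rcases hjk.lt_or_gt with h | h
      · have : (j:ℝ) + 1 ≤ (k:ℝ) := by exact_mod_cast Nat.succ_le_of_lt h
        nlinarith
      · have : (k:ℝ) + 1 ≤ (j:ℝ) := by exact_mod_cast Nat.succ_le_of_lt h
        nlinarith
    have hS := S_pos (n := n) hm
    calc (SS n m)^2 = (SS n m)^2 * 1 := by ring
      _ ≤ (SS n m)^2 * ((k:ℝ) - j)^2 := by nlinarith
      _ = (SS n m * k - SS n m * j)^2 := by ring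
  have hkey : tau n m * (SS n m)^2 = 16 * (n + 2) := tauS (n := n) hm
  have hprod := theta_prod_le (n := n) hm hj hk (θ₁ := θ₂) (θ₂ := θ₁)
    (by linarith) hd ha hb
  have hthsq : 0 ≤ θ₂^2 * (4 * (aa n m j)^2 + 1) := by positivity
  have hmain : tau n m * (SS n m)^2 / 2 ≤ θ₂ * (aa n m k - aa n m j)^2 := by
    calc tau n m * (SS n m)^2 / 2 = (tau n m / 2) * (SS n m)^2 := by ring
      _ ≤ θ₂ * (SS n m)^2 := mul_le_mul_of_nonneg_right hc (sq_nonneg _)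
      _ ≤ θ₂ * (aa n m k - aa n m j)^2 := mul_le_mul_of_nonneg_left hdiffsq (le_of_lt hθ₂pos)
  have expand : ((aa n m k * (1 + 2*θ₁) - aa n m j * (1 + 2*θ₂))^2
        + ((aa n m k)^2 - θ₁ - ((aa n m j)^2 - θ₂))^2 + ∑ t, (z₁ t - z₂ t)^2)
      - ((aa n m k * (1 + 2*θ₁) - aa n m j * (1 + 2*0))^2
        + ((aa n m k)^2 - θ₁ - ((aa n m j)^2 - 0))^2 + ∑ t, (z₁ t - (0:ℝ))^2)
      = 2 * θ₂ * (aa n m k - aa n m j)^2 - 2 * (θ₂ * θ₁ * (4 * aa n m j * aa n m k + 1))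
        + θ₂^2 * (4 * (aa n m j)^2 + 1)
        + (∑ t, (z₁ t - z₂ t)^2 - ∑ t, (z₁ t - (0:ℝ))^2) := by ring
  have hn : (0:ℝ) ≤ n := Nat.cast_nonneg n
  linarith [expand, hzz, hkey, hprod, hthsq, hmain]

end geom

/-! ### the training set -/

def sg (b : Bool) : ℝ := if b then 1 else -1

lemma sg_abs (b : Bool) : |sg b| ≤ 1 := by cases b <;> simp [sg]

def ham {n : ℕ} (u v : Fin n → Bool) : ℕ := (univ.filter fun t => u t ≠ v t).card

lemma sum_sg_sq {n : ℕ} (u v : Fin n → Bool) :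
    ∑ t, (sg (u t) - sg (v t))^2 = 4 * (ham u v : ℝ) := by
  classical
  rw [← Finset.sum_filter_add_sum_filter_not univ (fun t => u t ≠ v t)]
  have h1 : ∀ t ∈ univ.filter (fun t => u t ≠ v t), (sg (u t) - sg (v t))^2 = 4 := by
    intro t ht
    simp only [mem_filter] at ht
    cases hu : u t <;> cases hv : v t <;> simp [hu, hv, sg] at ht ⊢ <;> norm_num
  have h2 : ∀ t ∈ univ.filter (fun t => ¬ u t ≠ v t), (sg (u t) - sg (v t))^2 = 0 := by
    intro t ht
    simp only [mem_filter, not_not] at ht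
    rw [ht.2]
    ring
  rw [Finset.sum_congr rfl h1, Finset.sum_congr rfl h2, Finset.sum_const, Finset.sum_const]
  simp [ham, mul_comm]

lemma sum_sg_zero_sq {n : ℕ} (u : Fin n → Bool) :
    ∑ t, (sg (u t) - (0 : Fin n → ℝ) t)^2 = (n : ℝ) := by
  have : ∀ t ∈ (univ : Finset (Fin n)), (sg (u t) - (0 : Fin n → ℝ) t)^2 = 1 := by
    intro t _
    cases hu : u t <;> simp [hu, sg]
  rw [Finset.sum_congr rfl this]
  simp

lemma ham_eq_zero_iff {n : ℕ} (u v : Fin n → Bool) : ham u v = 0 ↔ u = v := by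
  constructor
  · intro h
    funext t
    by_contra hne
    have : t ∈ univ.filter fun t => u t ≠ v t := by simp [hne]
    rw [ham, Finset.card_eq_zero] at h
    simp [h] at this
  · intro h; subst h; simp [ham]

variable (n m) in
/-- the offset parameter of the "special" blue point. -/
def ths : ℝ := if n = 0 then tau n m / 2 else 2 * tau n m

variable (n m) in
def Red (j : ℕ) : E n := ptJ n m j 0 0

variable (n m) in
def Sp (j : ℕ) : E n := ptJ n m j (ths n m) 0

variable (n m) in
def Bl (j : ℕ) (u : Fin n → Bool) : E n := ptJ n m j (tau n m) (fun t => sg (u t))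

variable (n m) in
def Reds : Finset (E n) := (range m).image (Red n m)

variable (n m) in
def Sps : Finset (E n) := (range m).image (Sp n m)

variable (n m) in
def Bls : Finset (E n) :=
  ((range m) ×ˢ (univ : Finset (Fin n → Bool))).image fun p => Bl n m p.1 p.2

variable (n m) in
def PP : Finset (E n) := Reds n m ∪ Sps n m ∪ Bls n m

variable (n m) in
def lab : E n → Bool := fun x => if x ∈ Reds n m then false else true

variable (n m) in
/-- membership in copy `j` with blue offset parameters. -/
def InCopyB (j : ℕ) (x : E n) : Prop :=
  ∃ θ z, tau n m / 2 ≤ θ ∧ θ ≤ 2 * tau n m ∧ (∀ t, |z t| ≤ 1) ∧ x = ptJ n m j θ z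

variable (n m) in
/-- membership in copy `j` with general parameters. -/
def InCopy (j : ℕ) (x : E n) : Prop :=
  ∃ θ z, 0 ≤ θ ∧ θ ≤ 2 * tau n m ∧ (∀ t, |z t| ≤ 1) ∧ x = ptJ n m j θ z

lemma mem_PP {x : E n} : x ∈ PP n m ↔
    (∃ j < m, x = Red n m j) ∨ (∃ j < m, x = Sp n m j) ∨
      (∃ j < m, ∃ u, x = Bl n m j u) := by
  simp only [PP, Reds, Sps, Bls, mem_union, mem_image, mem_range, mem_product, Prod.exists]
  constructor
  · rintro ((⟨j, hj, rfl⟩ | ⟨j, hj, rfl⟩) | ⟨j, u, ⟨hj, -⟩, rfl⟩)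
    · exact Or.inl ⟨j, hj, rfl⟩
    · exact Or.inr (Or.inl ⟨j, hj, rfl⟩)
    · exact Or.inr (Or.inr ⟨j, hj, u, rfl⟩)
  · rintro (⟨j, hj, rfl⟩ | ⟨j, hj, rfl⟩ | ⟨j, hj, u, rfl⟩)
    · exact Or.inl (Or.inl ⟨j, hj, rfl⟩)
    · exact Or.inl (Or.inr ⟨j, hj, rfl⟩)
    · exact Or.inr ⟨j, u, ⟨hj, Finset.mem_univ u⟩, rfl⟩

lemma Red_mem {j : ℕ} (hj : j < m) : Red n m j ∈ PP n m :=
  mem_PP.mpr (Or.inl ⟨j, hj, rfl⟩)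

lemma Sp_mem {j : ℕ} (hj : j < m) : Sp n m j ∈ PP n m :=
  mem_PP.mpr (Or.inr (Or.inl ⟨j, hj, rfl⟩))

lemma Bl_mem {j : ℕ} (hj : j < m) (u : Fin n → Bool) : Bl n m j u ∈ PP n m :=
  mem_PP.mpr (Or.inr (Or.inr ⟨j, hj, u, rfl⟩))

lemma dsq_Sp_Red {j : ℕ} :
    dsq (Sp n m j) (Red n m j) = ths n m ^2 * (4 * (aa n m j)^2 + 1) := by
  unfold Sp Red
  rw [dsq_same]
  simp

lemma dsq_Bl_Bl {j : ℕ} (u v : Fin n → Bool) :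
    dsq (Bl n m j u) (Bl n m j v) = 4 * (ham u v : ℝ) := by
  unfold Bl
  rw [dsq_same, sum_sg_sq]
  ring

lemma dsq_Bl_Red {j : ℕ} (u : Fin n → Bool) :
    dsq (Bl n m j u) (Red n m j) = tau n m ^2 * (4 * (aa n m j)^2 + 1) + n := by
  unfold Bl Red
  rw [dsq_same, sum_sg_zero_sq]
  ring

lemma dsq_Bl_Sp {j : ℕ} (u : Fin n → Bool) :
    dsq (Bl n m j u) (Sp n m j)
      = (tau n m - ths n m)^2 * (4 * (aa n m j)^2 + 1) + n := by
  unfold Bl Sp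
  rw [dsq_same, sum_sg_zero_sq]

section struct
variable (hm : 1 ≤ m)
include hm

lemma ths_pos : 0 < ths n m := by
  have := tau_pos (n := n) hm
  unfold ths
  split <;> linarith

lemma ths_le : ths n m ≤ 2 * tau n m := by
  have := tau_pos (n := n) hm
  unfold ths
  split <;> linarith

lemma ths_ge : tau n m / 2 ≤ ths n m := by
  have := tau_pos (n := n) hm
  unfold ths
  split <;> linarith

lemma InCopyB.toInCopy {j : ℕ} {x : E n} (h : InCopyB n m j x) : InCopy n m j x := by
  obtain ⟨θ, z, h1, h2, h3, h4⟩ := h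
  have := tau_pos (n := n) hm
  exact ⟨θ, z, by linarith, h2, h3, h4⟩

lemma InCopy_Red (j : ℕ) : InCopy n m j (Red n m j) :=
  ⟨0, 0, le_refl _, by linarith [tau_pos (n := n) hm], fun t => by simp, rfl⟩

lemma InCopyB_Sp (j : ℕ) : InCopyB n m j (Sp n m j) :=
  ⟨ths n m, 0, ths_ge hm, ths_le hm, fun t => by simp, rfl⟩

lemma InCopyB_Bl (j : ℕ) (u : Fin n → Bool) : InCopyB n m j (Bl n m j u) :=
  ⟨tau n m, _, by linarith [tau_pos (n := n) hm], by linarith [tau_pos (n := n) hm],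
    fun t => sg_abs (u t), rfl⟩

/-- a point cannot lie in two distinct copies. -/
lemma InCopy_ne {j k : ℕ} (hj : j < m) (hk : k < m) (hjk : j ≠ k) {x y : E n}
    (h1 : InCopy n m j x) (h2 : InCopy n m k y) : x ≠ y := by
  obtain ⟨θ₁, z₁, a1, a2, a3, rfl⟩ := h1
  obtain ⟨θ₂, z₂, b1, b2, b3, rfl⟩ := h2
  apply ne_of_dsq_pos
  have := cross_far (n := n) hm (le_of_lt hj) (le_of_lt hk) hjk a1 a2 b1 b2 (z₁ := z₁) (z₂ := z₂)
  have hS := S_ge (n := n) hm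
  nlinarith

/-- same-copy points are close (convenient wrapper). -/
lemma InCopy_close {j : ℕ} (hj : j < m) {x y : E n}
    (h1 : InCopy n m j x) (h2 : InCopy n m j y) : dsq x y ≤ 5/4 + 4 * n := by
  obtain ⟨θ₁, z₁, a1, a2, a3, rfl⟩ := h1
  obtain ⟨θ₂, z₂, b1, b2, b3, rfl⟩ := h2
  exact same_copy_le hm (le_of_lt hj) a1 a2 b1 b2 a3 b3

omit hm in
lemma lab_Red {j : ℕ} (hj : j < m) : lab n m (Red n m j) = false := by
  unfold lab
  rw [if_pos]
  exact Finset.mem_image.mpr ⟨j, Finset.mem_range.mpr hj, rfl⟩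

omit hm in
lemma lab_eq_false_iff {x : E n} : lab n m x = false ↔ x ∈ Reds n m := by
  unfold lab
  split <;> simp_all

lemma lab_of_InCopyB {j : ℕ} (hj : j < m) {x : E n} (h : InCopyB n m j x) :
    lab n m x = true := by
  unfold lab
  rw [if_neg]
  intro hmem
  obtain ⟨i, hi, hxi⟩ := Finset.mem_image.mp hmem
  rw [Finset.mem_range] at hi
  obtain ⟨θ, z, a1, a2, a3, rfl⟩ := h
  by_cases hij : i = j
  · subst hij
    have hτ := tau_pos (n := n) hm
    have hne : Red n m i ≠ ptJ n m i θ z := by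
      apply ne_of_dsq_pos
      unfold Red
      rw [dsq_same]
      have hz := zsum_nonneg (n := n) (0 : Fin n → ℝ) z
      have h4 : (0:ℝ) < 4 * (aa n m i)^2 + 1 := by positivity
      nlinarith
    exact hne hxi
  · exact InCopy_ne hm hi hj hij (InCopy_Red hm i)
      (⟨θ, z, by linarith, a2, a3, rfl⟩) hxi

lemma lab_Sp {j : ℕ} (hj : j < m) : lab n m (Sp n m j) = true :=
  lab_of_InCopyB hm hj (InCopyB_Sp hm j)

lemma lab_Bl {j : ℕ} (hj : j < m) (u : Fin n → Bool) : lab n m (Bl n m j u) = true :=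
  lab_of_InCopyB hm hj (InCopyB_Bl hm j u)

/-- structure of red points of `P`. -/
lemma red_struct {x : E n} (hx : x ∈ PP n m) (hl : lab n m x = false) :
    ∃ j < m, x = Red n m j := by
  rcases mem_PP.mp hx with h | h | h
  · exact h
  · obtain ⟨j, hj, rfl⟩ := h
    rw [lab_Sp hm hj] at hl; exact absurd hl (by simp)
  · obtain ⟨j, hj, u, rfl⟩ := h
    rw [lab_Bl hm hj] at hl; exact absurd hl (by simp)

/-- structure of blue points of `P`. -/
lemma blue_struct {x : E n} (hx : x ∈ PP n m) (hl : lab n m x = true) :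
    ∃ j < m, InCopyB n m j x ∧ (x = Sp n m j ∨ ∃ u, x = Bl n m j u) := by
  rcases mem_PP.mp hx with h | h | h
  · obtain ⟨j, hj, rfl⟩ := h
    rw [lab_Red hj] at hl; exact absurd hl (by simp)
  · obtain ⟨j, hj, rfl⟩ := h
    exact ⟨j, hj, InCopyB_Sp hm j, Or.inl rfl⟩
  · obtain ⟨j, hj, u, rfl⟩ := h
    exact ⟨j, hj, InCopyB_Bl hm j u, Or.inr ⟨u, rfl⟩⟩

end struct

lemma dsq_comm {n : ℕ} (p q : E n) : dsq p q = dsq q p := by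
  unfold dsq
  congr 1
  ext i
  ring

section analysis
variable (hm : 1 ≤ m)
include hm

lemma W_pos (j : ℕ) : 0 < tau n m ^2 * (4 * (aa n m j)^2 + 1) := w_pos hm j

lemma W_le {j : ℕ} (hj : j ≤ m) : tau n m ^2 * (4 * (aa n m j)^2 + 1) ≤ 5/16 := by
  have h := prod_le (n := n) hm hj hj
  have : tau n m ^2 * (4 * aa n m j * aa n m j + 1)
      = tau n m ^2 * (4 * (aa n m j)^2 + 1) := by ring
  linarith

lemma InCopy_far {j k : ℕ} (hj : j < m) (hk : k < m) (hjk : j ≠ k) {x y : E n}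
    (h1 : InCopy n m j x) (h2 : InCopy n m k y) : (SS n m - 2)^2 ≤ dsq x y := by
  obtain ⟨θ₁, z₁, a1, a2, a3, rfl⟩ := h1
  obtain ⟨θ₂, z₂, b1, b2, b3, rfl⟩ := h2
  exact cross_far hm (le_of_lt hj) (le_of_lt hk) hjk a1 a2 b1 b2

lemma ths_sq_le {j : ℕ} (hj : j ≤ m) :
    ths n m ^2 * (4 * (aa n m j)^2 + 1) ≤ 4 * (tau n m ^2 * (4 * (aa n m j)^2 + 1)) := by
  have hτ := tau_pos (n := n) hm
  have hg := ths_ge (n := n) hm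
  have hl := ths_le (n := n) hm
  have hpos : (0:ℝ) < 4 * (aa n m j)^2 + 1 := by positivity
  have : ths n m ^2 ≤ 4 * tau n m ^2 := by nlinarith
  nlinarith

lemma enemy_exists : ∀ p ∈ PP n m, ∃ q ∈ PP n m, lab n m q ≠ lab n m p := by
  intro p hp
  have h0 : 0 < m := hm
  cases hl : lab n m p
  · exact ⟨Sp n m 0, Sp_mem h0, by rw [lab_Sp hm h0]; simp⟩
  · exact ⟨Red n m 0, Red_mem h0, by rw [lab_Red h0]; simp⟩

/-- Every nearest-enemy point is a center or a special point. -/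
lemma NE_subset {q : E n} (hq : q ∈ PP n m) (p : E n) (hp : p ∈ PP n m)
    (hne : IsNearestEnemy (PP n m) (lab n m) p q) :
    q ∈ Reds n m ∪ Sps n m := by
  obtain ⟨hqP, hlq, hmin⟩ := hne
  have hcg := cross_gt (n := n) hm
  cases hlp : lab n m p with
  | false =>
    obtain ⟨j, hj, rfl⟩ := red_struct hm hp hlp
    have hlq' : lab n m q = true := by
      rw [hlp] at hlq
      exact Bool.ne_false_iff.mp hlq
    obtain ⟨k, hk, hqB, hq2⟩ := blue_struct hm hqP hlq'
    have hmin' := hmin (Sp n m j) (Sp_mem hj) (by rw [lab_Sp hm hj, hlp]; simp)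
    rw [norm_le_iff] at hmin'
    by_cases hkj : k = j
    · subst hkj
      rcases hq2 with rfl | ⟨u, rfl⟩
      · exact Finset.mem_union_right _ (Finset.mem_image.mpr ⟨k, Finset.mem_range.mpr hk, rfl⟩)
      · exfalso
        rw [dsq_comm, dsq_Bl_Red, dsq_comm, dsq_Sp_Red] at hmin'
        have hW0 := W_pos (n := n) hm k
        have hWle := W_le (n := n) hm (le_of_lt hk)
        by_cases hn : n = 0
        · subst hn
          unfold ths at hmin'
          simp only [if_pos rfl] at hmin'
          push_cast at hmin'
          nlinarith
        · have hn1 : (1:ℝ) ≤ n := by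
            have : 1 ≤ n := Nat.one_le_iff_ne_zero.mpr hn
            exact_mod_cast this
          unfold ths at hmin'
          rw [if_neg hn] at hmin'
          nlinarith
    · exfalso
      have hfar := InCopy_far hm hj hk (fun h => hkj h.symm) (InCopy_Red hm j)
        (hqB.toInCopy hm)
      have hclose : dsq (Red n m j) (Sp n m j) ≤ 5/4 + 4 * n :=
        InCopy_close hm hj (InCopy_Red hm j) ((InCopyB_Sp hm j).toInCopy hm)
      linarith
  | true =>
    have hlq' : lab n m q = false := by
      rw [hlp] at hlq
      simpa using hlq
    obtain ⟨i, hi, rfl⟩ := red_struct hm hqP hlq'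
    obtain ⟨j, hj, hpB, -⟩ := blue_struct hm hp hlp
    have hmin' := hmin (Red n m j) (Red_mem hj) (by rw [lab_Red hj, hlp]; simp)
    rw [norm_le_iff] at hmin'
    by_cases hij : i = j
    · subst hij
      exact Finset.mem_union_left _ (Finset.mem_image.mpr ⟨i, Finset.mem_range.mpr hi, rfl⟩)
    · exfalso
      have hfar := InCopy_far hm hj hi (fun h => hij h.symm) (hpB.toInCopy hm)
        (InCopy_Red hm i)
      have hclose : dsq p (Red n m j) ≤ 5/4 + 4 * n :=
        InCopy_close hm hj (hpB.toInCopy hm) (InCopy_Red hm j)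
      linarith

lemma NE_bound :
    ({q : E n | q ∈ PP n m ∧ ∃ p ∈ PP n m, IsNearestEnemy (PP n m) (lab n m) p q}).ncard
      ≤ 2 * m := by
  have hsub : {q : E n | q ∈ PP n m ∧ ∃ p ∈ PP n m, IsNearestEnemy (PP n m) (lab n m) p q}
      ⊆ ↑(Reds n m ∪ Sps n m) := by
    rintro q ⟨hq, p, hp, hne⟩
    exact_mod_cast NE_subset hm hq p hp hne
  calc ({q : E n | q ∈ PP n m ∧ ∃ p ∈ PP n m, IsNearestEnemy (PP n m) (lab n m) p q}).ncard
      ≤ (↑(Reds n m ∪ Sps n m) : Set (E n)).ncard :=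
        Set.ncard_le_ncard hsub (Set.toFinite _)
    _ = (Reds n m ∪ Sps n m).card := Set.ncard_coe_finset _
    _ ≤ (Reds n m).card + (Sps n m).card := Finset.card_union_le _ _
    _ ≤ 2 * m := by
        have h1 : (Reds n m).card ≤ m := le_trans (Finset.card_image_le) (by simp)
        have h2 : (Sps n m).card ≤ m := le_trans (Finset.card_image_le) (by simp)
        omega

end analysis

/-! ### consistency forcing -/

section forcing
variable (hm : 1 ≤ m) {R : Finset (E n)} (hR : R ⊆ PP n m)
  (hcons : ∀ p ∈ PP n m, ∃ r ∈ R, lab n m r = lab n m p ∧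
    ∀ s ∈ R, lab n m s ≠ lab n m p → ‖p - r‖ < ‖p - s‖)
include hm hR hcons

omit hR hcons in
lemma copy_eq {j k : ℕ} (hj : j < m) (hk : k < m) {x : E n}
    (h1 : InCopy n m j x) (h2 : InCopy n m k x) : j = k := by
  by_contra h
  exact InCopy_ne hm hj hk h h1 h2 rfl

omit hR hcons in
/-- blocking, packaged: `x` in copy `j`, blue `y` in a different copy `k`:
then the center of copy `k` is at least as close to `x` as `y`. -/
lemma blocking' {j k : ℕ} (hj : j < m) (hk : k < m) (hjk : j ≠ k) {x y : E n}
    (h1 : InCopyB n m j x) (h2 : InCopyB n m k y) :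
    dsq x (Red n m k) ≤ dsq x y := by
  obtain ⟨θ₁, z₁, a1, a2, a3, rfl⟩ := h1
  obtain ⟨θ₂, z₂, b1, b2, b3, rfl⟩ := h2
  have hτ := tau_pos (n := n) hm
  exact blocking hm (le_of_lt hk) (le_of_lt hj) (fun h => hjk h.symm)
    (by linarith) a2 b1 b2 a3 b3

/-- if `R` contains a blue point of copy `j` then it contains the center of copy `j`. -/
lemma force_center {j : ℕ} (hj : j < m) {x : E n} (hx : x ∈ R)
    (hxB : InCopyB n m j x) : Red n m j ∈ R := by
  obtain ⟨r₀, hr₀R, hr₀l, hstrict⟩ := hcons (Red n m j) (Red_mem hj)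
  rw [lab_Red hj] at hr₀l
  obtain ⟨i, hi, rfl⟩ := red_struct hm (hR hr₀R) hr₀l
  have hxlab : lab n m x = true := lab_of_InCopyB hm hj hxB
  have hs := hstrict x hx (by rw [hxlab, lab_Red hj]; simp)
  rw [norm_lt_iff] at hs
  by_cases hij : i = j
  · subst hij; exact hr₀R
  · exfalso
    have hfar := InCopy_far (n := n) (m := m) hm hj hi (fun h => hij h.symm)
      (InCopy_Red hm j) (InCopy_Red hm i)
    have hclose : dsq (Red n m j) x ≤ 5/4 + 4 * n :=
      InCopy_close hm hj (InCopy_Red hm j) (hxB.toInCopy hm)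
    linarith [cross_gt (n := n) hm]

/-- every blue point of copy `j` is served inside copy `j`, and the center is in `R`. -/
lemma serve_in_copy {j : ℕ} (hj : j < m) {p : E n} (hp : p ∈ PP n m)
    (hpB : InCopyB n m j p) :
    ∃ r ∈ R, InCopyB n m j r ∧ Red n m j ∈ R ∧ dsq p r < dsq p (Red n m j) := by
  obtain ⟨r, hrR, hrl, hstrict⟩ := hcons p hp
  have hplab : lab n m p = true := lab_of_InCopyB hm hj hpB
  rw [hplab] at hrl
  obtain ⟨k, hk, hrB, -⟩ := blue_struct hm (hR hrR) hrl
  have hcenter : Red n m k ∈ R := force_center hm hR hcons hk hrR hrB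
  have hs := hstrict (Red n m k) hcenter (by rw [lab_Red hk, hplab]; simp)
  rw [norm_lt_iff] at hs
  by_cases hkj : k = j
  · subst hkj; exact ⟨r, hrR, hrB, hcenter, hs⟩
  · exfalso
    have hblock := blocking' hm hj hk (fun h => hkj h.symm) hpB hrB
    linarith

lemma all_centers {j : ℕ} (hj : j < m) : Red n m j ∈ R := by
  obtain ⟨r, -, -, h, -⟩ := serve_in_copy hm hR hcons hj (Bl_mem hj fun _ => false)
    (InCopyB_Bl hm j _)
  exact h

omit hR hcons in
/-- the form of a blue server inside copy `j`. -/
lemma server_form {j : ℕ} (hj : j < m) {r : E n} (hrP : r ∈ PP n m)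
    (hrB : InCopyB n m j r) : r = Sp n m j ∨ ∃ u, r = Bl n m j u := by
  obtain ⟨k, hk, hrB', hform⟩ := blue_struct hm hrP (lab_of_InCopyB hm hj hrB)
  have : k = j := copy_eq hm hk hj (hrB'.toInCopy hm) (hrB.toInCopy hm)
  subst this
  exact hform

lemma sp_in_R {j : ℕ} (hj : j < m) : Sp n m j ∈ R := by
  obtain ⟨r, hrR, hrB, hcen, hlt⟩ := serve_in_copy hm hR hcons hj (Sp_mem hj) (InCopyB_Sp hm j)
  rcases server_form hm hj (hR hrR) hrB with rfl | ⟨u, rfl⟩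
  · exact hrR
  · exfalso
    rw [dsq_comm, dsq_Bl_Sp, dsq_Sp_Red] at hlt
    have hW0 := W_pos (n := n) hm j
    have hWle := W_le (n := n) hm (le_of_lt hj)
    by_cases hn : n = 0
    · subst hn
      unfold ths at hlt
      simp only [if_pos rfl] at hlt
      push_cast at hlt
      nlinarith
    · have hn1 : (1:ℝ) ≤ n := by
        have : 1 ≤ n := Nat.one_le_iff_ne_zero.mpr hn
        exact_mod_cast this
      unfold ths at hlt
      rw [if_neg hn] at hlt
      nlinarith

/-- domination: every cube vertex is within Hamming distance `n/4` of a blue point of `R`. -/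
lemma domination (hn : n ≠ 0) {j : ℕ} (hj : j < m) (u : Fin n → Bool) :
    ∃ v, Bl n m j v ∈ R ∧ 4 * ham u v ≤ n := by
  obtain ⟨r, hrR, hrB, hcen, hlt⟩ := serve_in_copy hm hR hcons hj (Bl_mem hj u)
    (InCopyB_Bl hm j u)
  rcases server_form hm hj (hR hrR) hrB with rfl | ⟨v, rfl⟩
  · exfalso
    rw [dsq_Bl_Sp, dsq_Bl_Red] at hlt
    unfold ths at hlt
    rw [if_neg hn] at hlt
    nlinarith
  · refine ⟨v, hrR, ?_⟩
    rw [dsq_Bl_Bl, dsq_Bl_Red] at hlt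
    have hWle := W_le (n := n) hm (le_of_lt hj)
    have : (4 * ham u v : ℝ) < n + 1 := by nlinarith
    have : 4 * ham u v < n + 1 := by exact_mod_cast this
    omega

end forcing

/-! ### counting -/

variable (n) in
/-- number of subsets of size at most `n/4`. -/
def V : ℕ := ∑ i ∈ range (n/4 + 1), n.choose i

lemma card_small_sets (n : ℕ) :
    ((univ : Finset (Finset (Fin n))).filter fun s => s.card ≤ n/4).card = V n := by
  classical
  have he : ((univ : Finset (Finset (Fin n))).filter fun s => s.card ≤ n/4)
      = (range (n/4 + 1)).biUnion fun i => Finset.powersetCard i univ := by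
    ext s
    simp only [mem_filter, mem_univ, true_and, mem_biUnion, mem_range,
      Finset.mem_powersetCard_univ]
    constructor
    · intro h; exact ⟨s.card, by omega, rfl⟩
    · rintro ⟨i, hi, rfl⟩; omega
  rw [he, Finset.card_biUnion]
  · unfold V
    apply Finset.sum_congr rfl
    intro i _
    rw [Finset.card_powersetCard]
    simp
  · intro i _ j _ hij
    rw [Function.onFun, Finset.disjoint_left]
    intro s hs hs'
    rw [Finset.mem_powersetCard_univ] at hs hs'
    omega

lemma ball_card {n : ℕ} (v : Fin n → Bool) :
    ((univ : Finset (Fin n → Bool)).filter fun u => 4 * ham u v ≤ n).card ≤ V n := by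
  classical
  rw [← card_small_sets n]
  apply Finset.card_le_card_of_injOn (fun u => univ.filter fun t => u t ≠ v t)
  · intro u hu
    simp only [mem_coe, mem_filter, mem_univ, true_and] at hu ⊢
    have : ham u v ≤ n/4 := by unfold ham at hu ⊢; omega
    exact this
  · intro u hu u' hu' h
    simp only [Finset.coe_filter] at h
    funext t
    have ht : (u t ≠ v t) ↔ (u' t ≠ v t) := by
      constructor
      · intro hh
        have : t ∈ univ.filter fun t => u t ≠ v t := by simp [hh]
        rw [h] at this
        simpa using this
      · intro hh
        have : t ∈ univ.filter fun t => u' t ≠ v t := by simp [hh]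
        rw [← h] at this
        simpa using this
    revert ht
    cases u t <;> cases u' t <;> cases v t <;> simp

lemma V_le (n : ℕ) : (V n : ℝ) ≤ 3^(n/4) * (4/3)^n := by
  have hK : n/4 ≤ n := Nat.div_le_self n 4
  have hbin : ((4:ℝ)/3)^n = ∑ i ∈ range (n+1), (1/3:ℝ)^i * (n.choose i : ℝ) := by
    have h := add_pow (1/3 : ℝ) 1 n
    simp only [one_pow, mul_one] at h
    rw [← h]
    norm_num
  have hge : ∑ i ∈ range (n/4+1), (1/3:ℝ)^i * (n.choose i : ℝ) ≤ ((4:ℝ)/3)^n := by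
    rw [hbin]
    apply Finset.sum_le_sum_of_subset_of_nonneg
    · apply Finset.range_subset_range.mpr; omega
    · intro i _ _
      positivity
  have hterm : ∀ i ∈ range (n/4+1), (1/3:ℝ)^(n/4) * (n.choose i : ℝ)
      ≤ (1/3:ℝ)^i * (n.choose i : ℝ) := by
    intro i hi
    rw [mem_range] at hi
    apply mul_le_mul_of_nonneg_right _ (Nat.cast_nonneg _)
    apply pow_le_pow_of_le_one (by norm_num) (by norm_num)
    omega
  have hsum : (1/3:ℝ)^(n/4) * (V n : ℝ) ≤ ((4:ℝ)/3)^n := by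
    calc (1/3:ℝ)^(n/4) * (V n : ℝ)
        = ∑ i ∈ range (n/4+1), (1/3:ℝ)^(n/4) * (n.choose i : ℝ) := by
          rw [← Finset.mul_sum]
          unfold V
          push_cast
          ring
      _ ≤ ∑ i ∈ range (n/4+1), (1/3:ℝ)^i * (n.choose i : ℝ) := Finset.sum_le_sum hterm
      _ ≤ ((4:ℝ)/3)^n := hge
  have h3 : (0:ℝ) < 3^(n/4) := by positivity
  have hid : ((1:ℝ)/3)^(n/4) = (3^(n/4))⁻¹ := by
    rw [one_div, inv_pow]
  rw [hid] at hsum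
  rw [← mul_le_mul_iff_right₀ (show (0:ℝ) < (3^(n/4) : ℝ)⁻¹ by positivity)]
  calc (3^(n/4):ℝ)⁻¹ * (V n) ≤ (4/3)^n := hsum
    _ = (3^(n/4):ℝ)⁻¹ * (3^(n/4) * (4/3)^n) := by
        rw [← mul_assoc, inv_mul_cancel₀ (ne_of_gt h3), one_mul]

/-- the key arithmetic estimate, by induction in steps of 4. -/
lemma key_arith : ∀ k : ℕ,
    1 ≤ (3/2:ℝ)^k / 3^(k/4) ∧ (21/20:ℝ)^(k+1) ≤ 2 + (3/2:ℝ)^k / 3^(k/4) := by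
  intro k
  induction k using Nat.strong_induction_on with
  | _ k ih =>
    by_cases hk : k < 4
    · interval_cases k <;> norm_num
    · obtain ⟨k', rfl⟩ : ∃ k', k = k' + 4 := ⟨k - 4, by omega⟩
      obtain ⟨h1, h2⟩ := ih k' (by omega)
      have hdiv : (k' + 4)/4 = k'/4 + 1 := by omega
      have hpos3 : (0:ℝ) < 3^(k'/4) := by positivity
      have hA : (3/2:ℝ)^(k'+4) / 3^((k'+4)/4) = ((3/2:ℝ)^k' / 3^(k'/4)) * (27/16) := by
        rw [hdiv, pow_add, pow_add]
        field_simp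
        ring
      rw [hA]
      constructor
      · nlinarith
      · have hc : (21/20:ℝ)^(k'+4+1) = (21/20:ℝ)^(k'+1) * (21/20:ℝ)^4 := by
          rw [← pow_add]
        rw [hc]
        have hcpos : (0:ℝ) ≤ (21/20:ℝ)^4 := by positivity
        nlinarith [mul_le_mul_of_nonneg_right h2 hcpos]

section counting
variable (hm : 1 ≤ m) {R : Finset (E n)} (hR : R ⊆ PP n m)
  (hcons : ∀ p ∈ PP n m, ∃ r ∈ R, lab n m r = lab n m p ∧
    ∀ s ∈ R, lab n m s ≠ lab n m p → ‖p - r‖ < ‖p - s‖)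

variable (n m R) in
def domset (j : ℕ) : Finset (Fin n → Bool) := univ.filter fun u => Bl n m j u ∈ R

variable (n m R) in
def Kj (j : ℕ) : Finset (E n) :=
  insert (Red n m j) (insert (Sp n m j) ((domset n m R j).image (Bl n m j)))

include hm hR hcons in
lemma Kj_subset {j : ℕ} (hj : j < m) : Kj n m R j ⊆ R := by
  intro x hx
  unfold Kj at hx
  rcases Finset.mem_insert.mp hx with rfl | hx
  · exact all_centers hm hR hcons hj
  rcases Finset.mem_insert.mp hx with rfl | hx
  · exact sp_in_R hm hR hcons hj
  obtain ⟨u, hu, rfl⟩ := Finset.mem_image.mp hx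
  unfold domset at hu
  exact (Finset.mem_filter.mp hu).2

include hm in
lemma Kj_incopy {j : ℕ} {x : E n} (hx : x ∈ Kj n m R j) : InCopy n m j x := by
  unfold Kj at hx
  rcases Finset.mem_insert.mp hx with rfl | hx
  · exact InCopy_Red hm j
  rcases Finset.mem_insert.mp hx with rfl | hx
  · exact (InCopyB_Sp hm j).toInCopy hm
  obtain ⟨u, hu, rfl⟩ := Finset.mem_image.mp hx
  exact (InCopyB_Bl hm j u).toInCopy hm

include hm in
lemma Red_ne_Sp {j : ℕ} : Red n m j ≠ Sp n m j := by
  have h := dsq_Sp_Red (n := n) (m := m) (j := j)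
  have := ths_pos (n := n) hm
  intro he
  apply ne_of_dsq_pos (p := Sp n m j) (q := Red n m j) _ he.symm
  rw [h]
  positivity

include hm in
lemma Red_ne_Bl {j : ℕ} (u : Fin n → Bool) : Red n m j ≠ Bl n m j u := by
  have h := dsq_Bl_Red (n := n) (m := m) (j := j) u
  have := W_pos (n := n) hm j
  intro he
  apply ne_of_dsq_pos (p := Bl n m j u) (q := Red n m j) _ he.symm
  rw [h]
  nlinarith [Nat.cast_nonneg (α := ℝ) n]

include hm in
lemma Bl_inj {j : ℕ} {u v : Fin n → Bool} (h : Bl n m j u = Bl n m j v) : u = v := by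
  by_contra hne
  have hham : ham u v ≠ 0 := fun h0 => hne ((ham_eq_zero_iff u v).mp h0)
  have : 0 < dsq (Bl n m j u) (Bl n m j v) := by
    rw [dsq_Bl_Bl]
    have : (1:ℝ) ≤ ham u v := by
      have : 1 ≤ ham u v := Nat.one_le_iff_ne_zero.mpr hham
      exact_mod_cast this
    linarith
  exact ne_of_dsq_pos this h

include hm in
lemma Kj_card_zero {j : ℕ} : 2 ≤ (Kj n m R j).card := by
  have hsub : ({Red n m j, Sp n m j} : Finset (E n)) ⊆ Kj n m R j := by
    intro x hx
    rcases Finset.mem_insert.mp hx with rfl | hx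
    · exact Finset.mem_insert_self _ _
    · rw [Finset.mem_singleton] at hx
      subst hx
      exact Finset.mem_insert.mpr (Or.inr (Finset.mem_insert_self _ _))
  calc 2 = ({Red n m j, Sp n m j} : Finset (E n)).card :=
        (Finset.card_pair (Red_ne_Sp hm)).symm
    _ ≤ _ := Finset.card_le_card hsub

include hm in
lemma Kj_card_pos (hn : n ≠ 0) {j : ℕ} :
    (Kj n m R j).card = 2 + (domset n m R j).card := by
  have hn1 : (1:ℝ) ≤ n := by
    have : 1 ≤ n := Nat.one_le_iff_ne_zero.mpr hn
    exact_mod_cast this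
  have hSpBl : ∀ u : Fin n → Bool, Sp n m j ≠ Bl n m j u := by
    intro u he
    apply ne_of_dsq_pos (p := Bl n m j u) (q := Sp n m j) _ he.symm
    rw [dsq_Bl_Sp]
    nlinarith [sq_nonneg (tau n m - ths n m), sq_nonneg (aa n m j)]
  unfold Kj
  rw [Finset.card_insert_of_notMem, Finset.card_insert_of_notMem,
    Finset.card_image_of_injOn]
  · ring
  · intro u _ v _ h
    exact Bl_inj hm h
  · intro hmem
    obtain ⟨u, -, he⟩ := Finset.mem_image.mp hmem
    exact hSpBl u he.symm
  · intro hmem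
    rcases Finset.mem_insert.mp hmem with he | hmem
    · exact Red_ne_Sp hm he
    · obtain ⟨u, -, he⟩ := Finset.mem_image.mp hmem
      exact Red_ne_Bl hm u he.symm

include hm hR hcons in
lemma domset_card (hn : n ≠ 0) {j : ℕ} (hj : j < m) :
    2^n ≤ (domset n m R j).card * V n := by
  classical
  have hcover : (univ : Finset (Fin n → Bool)) ⊆
      (domset n m R j).biUnion fun v => univ.filter fun u => 4 * ham u v ≤ n := by
    intro u _
    obtain ⟨v, hv, hham⟩ := domination hm hR hcons hn hj u
    exact Finset.mem_biUnion.mpr ⟨v, by simpa [domset] using hv, by simp [hham]⟩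
  calc 2^n = (univ : Finset (Fin n → Bool)).card := by
        rw [Finset.card_univ, Fintype.card_fun]
        simp
    _ ≤ ((domset n m R j).biUnion fun v => univ.filter fun u => 4 * ham u v ≤ n).card :=
        Finset.card_le_card hcover
    _ ≤ ∑ v ∈ domset n m R j, (univ.filter fun u => 4 * ham u v ≤ n).card :=
        Finset.card_biUnion_le
    _ ≤ ∑ _v ∈ domset n m R j, V n := Finset.sum_le_sum fun v _ => ball_card v
    _ = (domset n m R j).card * V n := by rw [Finset.sum_const, smul_eq_mul]

include hm hR hcons in
lemma domset_card_real (hn : n ≠ 0) {j : ℕ} (hj : j < m) :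
    (3/2:ℝ)^n / 3^(n/4) ≤ ((domset n m R j).card : ℝ) := by
  have h1 : (2:ℝ)^n ≤ ((domset n m R j).card : ℝ) * V n := by
    exact_mod_cast domset_card hm hR hcons hn hj
  have h2 := V_le n
  have hD : (0:ℝ) ≤ ((domset n m R j).card : ℝ) := Nat.cast_nonneg _
  have h3 : (2:ℝ)^n ≤ ((domset n m R j).card : ℝ) * (3^(n/4) * (4/3)^n) := by
    calc (2:ℝ)^n ≤ ((domset n m R j).card : ℝ) * V n := h1
      _ ≤ _ := mul_le_mul_of_nonneg_left h2 hD
  have hpos : (0:ℝ) < 3^(n/4) * (4/3)^n := by positivity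
  rw [div_le_iff₀ (by positivity : (0:ℝ) < (3:ℝ)^(n/4))]
  have hkey : ((3:ℝ)/2)^n * (4/3)^n = 2^n := by
    rw [← mul_pow]
    norm_num
  have h43 : (0:ℝ) < ((4:ℝ)/3)^n := by positivity
  rw [← mul_le_mul_iff_left₀ h43]
  calc (3/2:ℝ)^n * (4/3)^n = 2^n := hkey
    _ ≤ ((domset n m R j).card : ℝ) * (3^(n/4) * (4/3)^n) := h3
    _ = ((domset n m R j).card : ℝ) * 3^(n/4) * (4/3)^n := by ring

include hm hR hcons in
lemma percopy {j : ℕ} (hj : j < m) : (21/20:ℝ)^(n+1) ≤ ((Kj n m R j).card : ℝ) := by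
  by_cases hn : n = 0
  · subst hn
    have := Kj_card_zero (n := 0) (m := m) (R := R) hm (j := j)
    have h2 : (2:ℝ) ≤ ((Kj 0 m R j).card : ℝ) := by exact_mod_cast this
    norm_num
    linarith
  · rw [Kj_card_pos hm hn]
    have hd := domset_card_real hm hR hcons hn hj
    have hk := (key_arith n).2
    push_cast
    linarith

include hm hR hcons in
lemma R_card_bound : (m:ℝ) * (21/20:ℝ)^(n+1) ≤ (R.card : ℝ) := by
  classical
  have hdisj : ∀ j ∈ range m, ∀ k ∈ range m, j ≠ k →
      Disjoint (Kj n m R j) (Kj n m R k) := by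
    intro j hj k hk hjk
    rw [Finset.disjoint_left]
    intro x hxj hxk
    exact InCopy_ne hm (mem_range.mp hj) (mem_range.mp hk) hjk
      (Kj_incopy hm hxj) (Kj_incopy hm hxk) rfl
  have hT : (range m).biUnion (Kj n m R) ⊆ R := by
    apply Finset.biUnion_subset.mpr
    intro j hj
    exact Kj_subset hm hR hcons (mem_range.mp hj)
  have hcard : ((range m).biUnion (Kj n m R)).card = ∑ j ∈ range m, (Kj n m R j).card :=
    Finset.card_biUnion hdisj
  have hsum : (m:ℝ) * (21/20:ℝ)^(n+1) ≤ ∑ j ∈ range m, ((Kj n m R j).card : ℝ) := by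
    calc (m:ℝ) * (21/20:ℝ)^(n+1) = ∑ _j ∈ range m, (21/20:ℝ)^(n+1) := by
          rw [Finset.sum_const, card_range, nsmul_eq_mul]
      _ ≤ _ := Finset.sum_le_sum fun j hj => percopy hm hR hcons (mem_range.mp hj)
  calc (m:ℝ) * (21/20:ℝ)^(n+1) ≤ ∑ j ∈ range m, ((Kj n m R j).card : ℝ) := hsum
    _ = (((range m).biUnion (Kj n m R)).card : ℝ) := by rw [hcard]; push_cast; rfl
    _ ≤ (R.card : ℝ) := by exact_mod_cast Finset.card_le_card hT

end counting

end CSLB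

end

/-- There is a constant `c > 1` such that for every `d ≥ 2` and `m ≥ 1` there is a training
set in `EuclideanSpace ℝ (Fin d)` with two classes and at most `2 * m` nearest-enemy points,
every consistent subset of which has cardinality at least `m * c ^ (d - 1)`. -/
theorem consistent_subset_lower_bound :
    ∃ c : ℝ, 1 < c ∧ ∀ d m : ℕ, 2 ≤ d → 1 ≤ m →
      ∃ (P : Finset (EuclideanSpace ℝ (Fin d))) (l : EuclideanSpace ℝ (Fin d) → Bool),
        (∀ p ∈ P, ∃ q ∈ P, l q ≠ l p) ∧
        {q : EuclideanSpace ℝ (Fin d) | q ∈ P ∧ ∃ p ∈ P, IsNearestEnemy P l p q}.ncard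
          ≤ 2 * m ∧
        ∀ R ⊆ P,
          (∀ p ∈ P, ∃ r ∈ R, l r = l p ∧ ∀ s ∈ R, l s ≠ l p → ‖p - r‖ < ‖p - s‖) →
          (m : ℝ) * c ^ (d - 1) ≤ (R.card : ℝ) := by
  refine ⟨21/20, by norm_num, ?_⟩
  intro d m hd hm
  obtain ⟨n, rfl⟩ : ∃ n, d = n + 2 := ⟨d - 2, by omega⟩
  have hd1 : n + 2 - 1 = n + 1 := by omega
  refine ⟨CSLB.PP n m, CSLB.lab n m, CSLB.enemy_exists hm, CSLB.NE_bound hm, ?_⟩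
  intro R hR hcons
  rw [hd1]
  exact CSLB.R_card_bound hm hR hcons
end

section
/- Let P be a training set in EuclideanSpace ℝ (Fin d) and let p ∈ P. Then every nearest enemy q of p is a border point of P: there exist a point q' ∈ P with l(q') ≠ l(q), a center z and a radius ρ > 0 with ‖z − q‖ = ρ, ‖z − q'‖ = ρ, and ‖z − x‖ ≥ ρ for all x ∈ P. -/
/-!
Put `v = p - q` and look at the balls `B t` with center `q + t • v` and radius `t * ‖v‖`: they all
pass through `q`, grow with `t`, and `B (1/2)` has diameter `[q, p]`. A point `x` with
`⟪v, x - q⟫ > 0` lies on the boundary of `B t` exactly for `t = ‖x - q‖² / (2 ⟪v, x - q⟫)`, so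
minimising this parameter over the enemies of `q` gives a ball `B t`, `t ≤ 1/2`, with an enemy of `q`
on its boundary and no enemy of `q` inside. Every other point has the label of `q`, hence is an enemy
of `p` and lies outside the open ball around `p` of radius `‖v‖`, which contains the open ball `B t`.
-/

open Finset
open scoped RealInnerProductSpace

section TangentBalls

variable {E : Type*} [NormedAddCommGroup E] [InnerProductSpace ℝ E]

/-- The parameter `t` for which `x` lies on the sphere with center `q + t • v` through `q`
(meaningful only when `0 < ⟪v, x - q⟫`). -/
noncomputable def sphereParam (q v x : E) : ℝ :=
  ‖x - q‖ ^ 2 / (2 * ⟪v, x - q⟫)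

theorem norm_add_smul_sub_sq (q v x : E) (t : ℝ) :
    ‖q + t • v - x‖ ^ 2 = ‖x - q‖ ^ 2 - 2 * t * ⟪v, x - q⟫ + t ^ 2 * ‖v‖ ^ 2 := by
  rw [show q + t • v - x = t • v - (x - q) by abel, norm_sub_sq_real, real_inner_smul_left,
    norm_smul, Real.norm_eq_abs, mul_pow, sq_abs]
  ring

theorem norm_add_smul_sub_lt_iff {q v x : E} {t : ℝ} (ht : 0 ≤ t) :
    ‖q + t • v - x‖ < t * ‖v‖ ↔ ‖x - q‖ ^ 2 < 2 * t * ⟪v, x - q⟫ := by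
  rw [← sq_lt_sq₀ (norm_nonneg _) (by positivity), norm_add_smul_sub_sq, mul_pow]
  constructor <;> intro h <;> linarith

theorem sphereParam_lt_iff {q v x : E} {t : ℝ} (hx : 0 < ⟪v, x - q⟫) :
    sphereParam q v x < t ↔ ‖x - q‖ ^ 2 < 2 * t * ⟪v, x - q⟫ := by
  rw [sphereParam, div_lt_iff₀ (by positivity)]
  ring_nf

theorem sphereParam_pos {q v x : E} (hx : 0 < ⟪v, x - q⟫) : 0 < sphereParam q v x := by
  have hxq : x - q ≠ 0 := fun h => hx.ne' (by rw [h, inner_zero_right])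
  unfold sphereParam
  positivity

theorem norm_add_sphereParam_smul_sub {q v x : E} (hx : 0 < ⟪v, x - q⟫) :
    ‖q + sphereParam q v x • v - x‖ = sphereParam q v x * ‖v‖ := by
  have ht := sphereParam_pos hx
  rw [← sq_eq_sq₀ (norm_nonneg _) (by positivity), norm_add_smul_sub_sq, mul_pow, sphereParam]
  field_simp
  ring

theorem sphereParam_sub_self {p q : E} (hpq : p ≠ q) : sphereParam q (p - q) p = 1 / 2 := by
  have : ‖p - q‖ ≠ 0 := norm_ne_zero_iff.2 (sub_ne_zero.2 hpq)
  rw [sphereParam, real_inner_self_eq_norm_sq]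
  field_simp

theorem exists_ball_tangent_of_inner_pos (S : Finset E) {q v p : E} (hp : p ∈ S)
    (hpv : 0 < ⟪v, p - q⟫) :
    ∃ x₀ ∈ S, ∃ t : ℝ, 0 < t ∧ t ≤ sphereParam q v p ∧ ‖q + t • v - x₀‖ = t * ‖v‖ ∧
      ∀ x ∈ S, t * ‖v‖ ≤ ‖q + t • v - x‖ := by
  classical
  set T := S.filter fun x => 0 < ⟪v, x - q⟫
  have hpT : p ∈ T := mem_filter.2 ⟨hp, hpv⟩
  obtain ⟨x₀, hx₀T, hmin⟩ := T.exists_min_image (sphereParam q v) ⟨p, hpT⟩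
  obtain ⟨hx₀S, hx₀v⟩ := mem_filter.1 hx₀T
  have ht := sphereParam_pos hx₀v
  refine ⟨x₀, hx₀S, _, ht, hmin p hpT, norm_add_sphereParam_smul_sub hx₀v, fun x hx => ?_⟩
  by_contra! hlt
  rw [norm_add_smul_sub_lt_iff ht.le] at hlt
  -- a point strictly inside the ball lies in the open half-space, so it competes in the minimum
  have hxv : 0 < ⟪v, x - q⟫ :=
    pos_of_mul_pos_right ((sq_nonneg _).trans_lt hlt) (by positivity)
  exact ((sphereParam_lt_iff hxv).2 hlt).not_ge (hmin x (mem_filter.2 ⟨hx, hxv⟩))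

theorem mul_norm_sub_le_norm_add_smul_sub {p q x : E} {t : ℝ} (ht : t ≤ 1)
    (hx : ‖p - q‖ ≤ ‖p - x‖) : t * ‖p - q‖ ≤ ‖q + t • (p - q) - x‖ := by
  have hpz : ‖p - (q + t • (p - q))‖ = (1 - t) * ‖p - q‖ := by
    rw [show p - (q + t • (p - q)) = (1 - t) • (p - q) by module, norm_smul, Real.norm_eq_abs,
      abs_of_nonneg (by linarith)]
  have := norm_sub_le_norm_sub_add_norm_sub p (q + t • (p - q)) x
  linarith

end TangentBalls

theorem nearestEnemy_isBorder_general {d : ℕ} {Λ : Type*}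
    (P : Finset (EuclideanSpace ℝ (Fin d))) (l : EuclideanSpace ℝ (Fin d) → Λ)
    (p q : EuclideanSpace ℝ (Fin d)) (hp : p ∈ P)
    (hq : IsNearestEnemy P l p q) :
    IsBorder P l q := by
  classical
  obtain ⟨-, hlq, hmin⟩ := hq
  have hpq : p ≠ q := fun h => hlq (by rw [h])
  have hpv : 0 < ⟪p - q, p - q⟫ := real_inner_self_pos.2 (sub_ne_zero.2 hpq)
  obtain ⟨x₀, hx₀, t, ht, ht_half, hx₀t, hempty⟩ := exists_ball_tangent_of_inner_pos
    (P.filter (l · ≠ l q)) (mem_filter.2 ⟨hp, hlq.symm⟩) hpv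
  rw [sphereParam_sub_self hpq] at ht_half
  obtain ⟨hx₀P, hlx₀⟩ := mem_filter.1 hx₀
  refine ⟨x₀, hx₀P, hlx₀, q + t • (p - q), t * ‖p - q‖,
    mul_pos ht (norm_pos_iff.2 (sub_ne_zero.2 hpq)), ?_, hx₀t, fun x hx => ?_⟩
  · rw [add_sub_cancel_left, norm_smul, Real.norm_of_nonneg ht.le]
  · by_cases hlx : l x = l q
    · exact mul_norm_sub_le_norm_add_smul_sub (by linarith) (hmin x hx (hlx ▸ hlq))
    · exact hempty x (mem_filter.2 ⟨hx, hlx⟩)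

/-- Every nearest enemy of a point of `P` is a border point of `P`. -/
theorem nearestEnemy_isBorder {d : ℕ} {Λ : Type*}
    (P : Finset (EuclideanSpace ℝ (Fin d))) (l : EuclideanSpace ℝ (Fin d) → Λ)
    (hP : ∀ p ∈ P, ∃ q ∈ P, l q ≠ l p)
    (p q : EuclideanSpace ℝ (Fin d)) (hp : p ∈ P)
    (hq : IsNearestEnemy P l p q) :
    IsBorder P l q :=
  nearestEnemy_isBorder_general P l p q hp hq
end

section
/- Let P be a training set in EuclideanSpace ℝ (Fin d) and let p ∈ P. Then there exists a point p* ∈ P with l(p*) = l(p) and ‖p − p*‖ < d_ne(p) such that p* is a border point of P. (That is, the open nearest-enemy ball of every point of P contains a border point of the same class as p; one such p* lies, together with a nearest enemy of p, on the boundary of a ball whose interior contains no point of P.) -/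
/-!
Let `q` be a nearest enemy of `p`. On the segment `[p, q]` the distance to the class of `p`
vanishes at `p` and the distance to the enemies of `p` vanishes at `q`, so the two agree at some
`z`. The ball around `z` of that common radius `ρ > 0` contains no point of `P` in its interior
and has a point `a` of the class of `p` and an enemy on its boundary, so `a` is a border point.
Since `‖z - a‖ = ρ ≤ ‖z - q‖`, the triangle inequality through `z` gives `‖p - a‖ ≤ ‖p - q‖`,
and by strict convexity of the norm equality would force `a = q`.
-/

open Metric

section Geometry

variable {E : Type*} [NormedAddCommGroup E] [NormedSpace ℝ E]

theorem exists_mem_segment_infDist_eq {A B : Set E} {p q : E} (hp : p ∈ A) (hq : q ∈ B) :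
    ∃ z ∈ segment ℝ p q, infDist z A = infDist z B :=
  (convex_segment p q).isPreconnected.intermediate_value₂ (left_mem_segment ℝ p q)
    (right_mem_segment ℝ p q) (continuous_infDist_pt A).continuousOn
    (continuous_infDist_pt B).continuousOn
    (by rw [infDist_zero_of_mem hp]; exact infDist_nonneg)
    (by rw [infDist_zero_of_mem hq]; exact infDist_nonneg)

theorem dist_lt_of_mem_segment_of_dist_le [StrictConvexSpace ℝ E] {p q z a : E}
    (hz : z ∈ segment ℝ p q) (hzp : z ≠ p) (hza : dist z a ≤ dist z q) (haq : a ≠ q) :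
    dist p a < dist p q := by
  by_contra! hle
  have hpzq : dist p z + dist z q = dist p q := dist_add_dist_of_mem_segment hz
  have hpza : dist p z + dist z a = dist p a := by linarith [dist_triangle p z a]
  have hzq_btw : Wbtw ℝ p z q := mem_segment_iff_wbtw.1 hz
  have hza_btw : Wbtw ℝ p z a := dist_add_dist_eq_iff.1 hpza
  have hray : SameRay ℝ (a - p) (q - p) :=
    hza_btw.sameRay_vsub_left.symm.trans hzq_btw.sameRay_vsub_left
      fun h ↦ absurd (sub_eq_zero.1 h) hzp
  have hnorm : ‖a - p‖ = ‖q - p‖ := by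
    rw [← dist_eq_norm, ← dist_eq_norm, dist_comm a, dist_comm q]; linarith
  exact haq (sub_left_injective (hray.eq_of_norm_eq hnorm))

theorem exists_empty_ball_touching_of_disjoint [StrictConvexSpace ℝ E] {A B : Set E}
    (hA : IsCompact A) (hB : IsCompact B) (hAB : Disjoint A B) {p q : E} (hp : p ∈ A)
    (hq : q ∈ B) :
    ∃ a ∈ A, ∃ b ∈ B, ∃ z : E, dist p a < dist p q ∧ 0 < dist z a ∧ dist z b = dist z a ∧
      ∀ x ∈ A ∪ B, dist z a ≤ dist z x := by
  obtain ⟨z, hzpq, hz⟩ := exists_mem_segment_infDist_eq hp hq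
  obtain ⟨a, ha, hza⟩ := hA.exists_infDist_eq_dist ⟨p, hp⟩ z
  obtain ⟨b, hb, hzb⟩ := hB.exists_infDist_eq_dist ⟨q, hq⟩ z
  have hρ : 0 < infDist z A := by
    refine infDist_nonneg.lt_of_ne fun h ↦ Set.disjoint_left.mp hAB (?_ : z ∈ A) ?_
    · exact (hA.isClosed.mem_iff_infDist_zero ⟨p, hp⟩).2 h.symm
    · exact (hB.isClosed.mem_iff_infDist_zero ⟨q, hq⟩).2 (hz ▸ h.symm)
  have hzp : z ≠ p := by
    rintro rfl
    exact hρ.ne' (infDist_zero_of_mem hp)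
  refine ⟨a, ha, b, hb, z, ?_, hza ▸ hρ, by rw [← hza, ← hzb, hz], ?_⟩
  · refine dist_lt_of_mem_segment_of_dist_le hzpq hzp ?_ (hAB.ne_of_mem ha hq)
    rw [← hza, hz]
    exact infDist_le_dist_of_mem hq
  · rintro x (hx | hx)
    · exact hza ▸ infDist_le_dist_of_mem hx
    · exact hza ▸ hz ▸ infDist_le_dist_of_mem hx

end Geometry

section NearestEnemy

variable {d : ℕ} {Λ : Type*} {P : Finset (EuclideanSpace ℝ (Fin d))}
  {l : EuclideanSpace ℝ (Fin d) → Λ} {p q : EuclideanSpace ℝ (Fin d)}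

theorem exists_isNearestEnemy (h : ∃ q ∈ P, l q ≠ l p) : ∃ q, IsNearestEnemy P l p q := by
  classical
  obtain ⟨q, hq, hmin⟩ := (P.filter (l · ≠ l p)).exists_min_image (‖p - ·‖)
    (by simpa [Finset.filter_nonempty_iff] using h)
  rw [Finset.mem_filter] at hq
  exact ⟨q, hq.1, hq.2, fun q' hq' hl ↦ hmin q' (Finset.mem_filter.2 ⟨hq', hl⟩)⟩

theorem IsNearestEnemy.dne_eq (h : IsNearestEnemy P l p q) : dne P l p = ‖p - q‖ := by
  refine IsLeast.csInf_eq ⟨⟨q, h.1, h.2.1, rfl⟩, ?_⟩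
  rintro r ⟨q', hq', hl, rfl⟩
  exact h.2.2 q' hq' hl

end NearestEnemy

/-- The open nearest-enemy ball of every `p ∈ P` contains a border point of `P`
of the same class as `p`. -/
theorem border_point_in_ne_ball {d : ℕ} {Λ : Type*}
    (P : Finset (EuclideanSpace ℝ (Fin d))) (l : EuclideanSpace ℝ (Fin d) → Λ)
    (hP : ∀ p ∈ P, ∃ q ∈ P, l q ≠ l p)
    (p : EuclideanSpace ℝ (Fin d)) (hp : p ∈ P) :
    ∃ pstar ∈ P, l pstar = l p ∧ ‖p - pstar‖ < dne P l p ∧ IsBorder P l pstar := by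
  obtain ⟨q, hq⟩ := exists_isNearestEnemy (hP p hp)
  let A : Set (EuclideanSpace ℝ (Fin d)) := {x | x ∈ P ∧ l x = l p}
  let B : Set (EuclideanSpace ℝ (Fin d)) := {x | x ∈ P ∧ l x ≠ l p}
  have hA : A.Finite := P.finite_toSet.subset fun x hx ↦ hx.1
  have hB : B.Finite := P.finite_toSet.subset fun x hx ↦ hx.1
  have hAB : Disjoint A B := Set.disjoint_left.2 fun x hxA hxB ↦ hxB.2 hxA.2
  obtain ⟨a, ⟨haP, hal⟩, b, ⟨hbP, hbl⟩, z, hpa, hρ, hzb, hmin⟩ :=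
    exists_empty_ball_touching_of_disjoint hA.isCompact hB.isCompact hAB ⟨hp, rfl⟩ ⟨hq.1, hq.2.1⟩
  simp only [dist_eq_norm] at hpa hρ hzb hmin
  refine ⟨a, haP, hal, hq.dne_eq ▸ hpa, b, hbP, hal ▸ hbl, z, ‖z - a‖, hρ, rfl, hzb, ?_⟩
  intro x hx
  exact hmin x ((em (l x = l p)).imp (⟨hx, ·⟩) (⟨hx, ·⟩))
end

section
/- Let P be a training set in EuclideanSpace ℝ (Fin d). Let κ be the number of points of P that are a nearest enemy of some point of P, and let k be the number of border points of P. Then κ ≤ k. -/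
/-!
If `q` is a nearest enemy of `p`, grow a ball through `q` whose centre moves from `q` towards
`p`, the centre at parameter `s` being `lineMap q p s` and the radius `s * dist q p`. By the
intermediate value theorem there is a parameter `s ∈ (0, 1]` at which the points of the class
of `p` nearest to the centre lie on the sphere; such a point `x` is an enemy of `q`. The open
ball then contains no point of `p`'s class by construction, and no enemy `y` of `p` either,
since `dist p y ≥ dist p q` and the ball lies inside the ball of radius `dist p q` about `p`.
-/

open AffineMap

theorem exists_touching_ball_along_segment {E : Type*} [NormedAddCommGroup E]
    [NormedSpace ℝ E] {p q : E} {S : Finset E} (hp : p ∈ S) (hq : q ∉ S) :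
    ∃ s ∈ Set.Ioc (0 : ℝ) 1, ∃ x ∈ S, dist (lineMap q p s) x = s * dist q p ∧
      ∀ y ∈ S, s * dist q p ≤ dist (lineMap q p s) y := by
  have hS : S.Nonempty := ⟨p, hp⟩
  set gap : ℝ → E → ℝ := fun s x => dist (lineMap q p s) x - s * dist q p
  set g : ℝ → ℝ := fun s => S.inf' hS (gap s)
  have hg : Continuous g := Continuous.finset_inf'_apply hS fun x _ => by fun_prop
  have hg0 : 0 < g 0 := (Finset.lt_inf'_iff _).2 fun x hx => by
    simpa [gap] using dist_pos.2 (ne_of_mem_of_not_mem hx hq).symm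
  have hg1 : g 1 ≤ 0 := (Finset.inf'_le _ hp).trans (by simp [gap])
  obtain ⟨s, hs, hgs⟩ := intermediate_value_Icc' zero_le_one hg.continuousOn ⟨hg1, hg0.le⟩
  have hs0 : s ≠ 0 := by rintro rfl; exact hg0.ne' hgs
  obtain ⟨x, hx, hgx⟩ := Finset.exists_mem_eq_inf' hS (gap s)
  refine ⟨s, ⟨hs.1.lt_of_ne' hs0, hs.2⟩, x, hx, ?_, fun y hy => ?_⟩
  · have : gap s x = 0 := hgx ▸ hgs
    linarith
  · have : g s ≤ gap s y := Finset.inf'_le _ hy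
    linarith

theorem IsNearestEnemy.isBorder {d : ℕ} {Λ : Type*} {P : Finset (EuclideanSpace ℝ (Fin d))}
    {l : EuclideanSpace ℝ (Fin d) → Λ} {p q : EuclideanSpace ℝ (Fin d)} (hp : p ∈ P)
    (h : IsNearestEnemy P l p q) : IsBorder P l q := by
  classical
  obtain ⟨-, hlq, hmin⟩ := h
  have hpq : p ≠ q := fun e => hlq (e ▸ rfl)
  obtain ⟨s, hs, x, hx, hzx, hempty⟩ := exists_touching_ball_along_segment
    (S := P.filter (l · = l p)) (Finset.mem_filter.2 ⟨hp, rfl⟩)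
    (fun h => hlq (Finset.mem_filter.1 h).2)
  obtain ⟨hxP, hlx⟩ := Finset.mem_filter.1 hx
  have hzq : dist (lineMap q p s) q = s * dist q p := by
    rw [dist_lineMap_left, Real.norm_of_nonneg hs.1.le]
  have hzp : dist (lineMap q p s) p = (1 - s) * dist q p := by
    rw [dist_lineMap_right, Real.norm_of_nonneg (sub_nonneg.2 hs.2)]
  refine ⟨x, hxP, hlx.trans_ne hlq.symm, lineMap q p s, s * dist q p,
    mul_pos hs.1 (dist_pos.2 hpq.symm), ?_, ?_, fun y hy => ?_⟩
  · rwa [← dist_eq_norm]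
  · rwa [← dist_eq_norm]
  rw [← dist_eq_norm]
  by_cases hly : l y = l p
  · exact hempty y (Finset.mem_filter.2 ⟨hy, hly⟩)
  · have hqy : dist p q ≤ dist p y := by simpa only [dist_eq_norm] using hmin y hy hly
    have := dist_triangle_left p y (lineMap q p s)
    rw [dist_comm p q] at hqy
    linarith

theorem kappa_le_k_general {d : ℕ} {Λ : Type*}
    (P : Finset (EuclideanSpace ℝ (Fin d))) (l : EuclideanSpace ℝ (Fin d) → Λ) :
    {q : EuclideanSpace ℝ (Fin d) | q ∈ P ∧ ∃ p ∈ P, IsNearestEnemy P l p q}.ncard ≤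
      {q : EuclideanSpace ℝ (Fin d) | q ∈ P ∧ IsBorder P l q}.ncard :=
  Set.ncard_le_ncard (fun _ ⟨hq, _, hp, hne⟩ => ⟨hq, hne.isBorder hp⟩)
    (P.finite_toSet.subset fun _ hq => hq.1)

/-- The number `κ` of nearest-enemy points of `P` is at most the number `k` of border
points of `P`. -/
theorem kappa_le_k {d : ℕ} {Λ : Type*}
    (P : Finset (EuclideanSpace ℝ (Fin d))) (l : EuclideanSpace ℝ (Fin d) → Λ)
    (hP : ∀ p ∈ P, ∃ q ∈ P, l q ≠ l p) :
    {q : EuclideanSpace ℝ (Fin d) | q ∈ P ∧ ∃ p ∈ P, IsNearestEnemy P l p q}.ncard ≤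
      {q : EuclideanSpace ℝ (Fin d) | q ∈ P ∧ IsBorder P l q}.ncard :=
  kappa_le_k_general P l
end

section
/- Let p ∈ EuclideanSpace ℝ (Fin d) and let s₁, …, sₘ be distinct points, all different from p, such that for all indices i < j one has ‖p − sᵢ‖ ≤ ‖p − sⱼ‖ and ‖p − sⱼ‖ ≤ ‖sᵢ − sⱼ‖. Then m ≤ 3^d. -/
open Metric Set MeasureTheory Module ENNReal

/-- Any `1`-separated set in the unit ball has cardinality at most `3 ^ dim`. -/
lemma card_le_of_separated_one {E : Type*} [NormedAddCommGroup E] [NormedSpace ℝ E]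
    [FiniteDimensional ℝ E] (s : Finset E) (hs : ∀ c ∈ s, ‖c‖ ≤ 1)
    (h : ∀ c ∈ s, ∀ d ∈ s, c ≠ d → 1 ≤ ‖c - d‖) : s.card ≤ 3 ^ finrank ℝ E := by
  borelize E
  let μ : Measure E := Measure.addHaar
  let δ : ℝ := (1 : ℝ) / 2
  let ρ : ℝ := (3 : ℝ) / 2
  have ρpos : 0 < ρ := by norm_num
  set A := ⋃ c ∈ s, ball (c : E) δ with hA
  have D : Set.Pairwise (s : Set E) (Function.onFun Disjoint fun c => ball (c : E) δ) := by
    rintro c hc d hd hcd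
    apply ball_disjoint_ball
    rw [dist_eq_norm]
    convert h c hc d hd hcd
    norm_num
  have A_subset : A ⊆ ball (0 : E) ρ := by
    refine iUnion₂_subset fun x hx => ?_
    apply ball_subset_ball'
    calc
      δ + dist x 0 ≤ δ + 1 := by rw [dist_zero_right]; exact add_le_add le_rfl (hs x hx)
      _ = 3 / 2 := by norm_num
  have I :
    (s.card : ℝ≥0∞) * ENNReal.ofReal (δ ^ finrank ℝ E) * μ (ball 0 1) ≤
      ENNReal.ofReal (ρ ^ finrank ℝ E) * μ (ball 0 1) :=
    calc
      (s.card : ℝ≥0∞) * ENNReal.ofReal (δ ^ finrank ℝ E) * μ (ball 0 1) = μ A := by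
        rw [hA, measure_biUnion_finset D fun c _ => measurableSet_ball]
        have I : 0 < δ := by norm_num
        simp only [div_pow, μ.addHaar_ball_of_pos _ I]
        simp only [one_div, one_pow, Finset.sum_const, nsmul_eq_mul, mul_assoc]
      _ ≤ μ (ball (0 : E) ρ) := measure_mono A_subset
      _ = ENNReal.ofReal (ρ ^ finrank ℝ E) * μ (ball 0 1) := by
        simp only [μ.addHaar_ball_of_pos _ ρpos]
  have J : (s.card : ℝ≥0∞) * ENNReal.ofReal (δ ^ finrank ℝ E) ≤ ENNReal.ofReal (ρ ^ finrank ℝ E) :=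
    (ENNReal.mul_le_mul_iff_left (measure_ball_pos _ _ zero_lt_one).ne' measure_ball_lt_top.ne).1 I
  have K : (s.card : ℝ) ≤ (3 : ℝ) ^ finrank ℝ E := by
    have := ENNReal.toReal_le_of_le_ofReal (pow_nonneg ρpos.le _) J
    simpa [ρ, δ, div_eq_mul_inv, mul_pow] using this
  exact mod_cast K

/-- The angle lemma: normalized vectors are `1`-separated. -/
lemma one_le_norm_sub_normalized {d : ℕ} (x y : EuclideanSpace ℝ (Fin d))
    (hx : x ≠ 0) (hxy : ‖x‖ ≤ ‖y‖) (hsep : ‖y‖ ≤ ‖x - y‖) :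
    1 ≤ ‖‖x‖⁻¹ • x - ‖y‖⁻¹ • y‖ := by
  have ha : (0:ℝ) < ‖x‖ := norm_pos_iff.2 hx
  have hb : (0:ℝ) < ‖y‖ := lt_of_lt_of_le ha hxy
  set u := ‖x‖⁻¹ • x
  set v := ‖y‖⁻¹ • y
  have hu : ‖u‖ = 1 := by
    simp [u, norm_smul, abs_of_pos (inv_pos.2 ha), inv_mul_cancel₀ ha.ne']
  have hv : ‖v‖ = 1 := by
    simp [v, norm_smul, abs_of_pos (inv_pos.2 hb), inv_mul_cancel₀ hb.ne']
  have hinner_xy : inner ℝ x y ≤ ‖x‖^2 / 2 := by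
    have h1 : ‖x - y‖^2 = ‖x‖^2 - 2 * inner ℝ x y + ‖y‖^2 := norm_sub_sq_real x y
    nlinarith [hsep, norm_nonneg (x - y), hb]
  have hinner_uv : (inner ℝ u v : ℝ) = ‖x‖⁻¹ * (‖y‖⁻¹ * inner ℝ x y) := by
    rw [show u = ‖x‖⁻¹ • x from rfl, show v = ‖y‖⁻¹ • y from rfl,
      real_inner_smul_left, real_inner_smul_right]
  have hle : (inner ℝ u v : ℝ) ≤ 1 / 2 := by
    rw [hinner_uv]
    rcases le_or_gt (inner ℝ x y : ℝ) 0 with hneg | hpos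
    · have : ‖x‖⁻¹ * (‖y‖⁻¹ * inner ℝ x y) ≤ 0 := by
        apply mul_nonpos_of_nonneg_of_nonpos (by positivity)
        exact mul_nonpos_of_nonneg_of_nonpos (by positivity) hneg
      linarith
    · have h2 : ‖x‖⁻¹ * (‖y‖⁻¹ * inner ℝ x y) ≤ ‖x‖⁻¹ * (‖y‖⁻¹ * (‖x‖^2 / 2)) := by
        gcongr
      have h3 : ‖x‖⁻¹ * (‖y‖⁻¹ * (‖x‖^2 / 2)) = ‖x‖ / (2 * ‖y‖) := by
        field_simp
      have h4 : ‖x‖ / (2 * ‖y‖) ≤ 1 / 2 := by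
        rw [div_le_div_iff₀ (by positivity) (by norm_num)]
        linarith
      linarith
  have hsq : ‖u - v‖^2 = ‖u‖^2 - 2 * inner ℝ u v + ‖v‖^2 := norm_sub_sq_real u v
  rw [hu, hv] at hsq
  nlinarith [norm_nonneg (u - v)]

/-- If `s₁, …, sₘ` are distinct points, all different from `p`, such that for `i < j` one has
`‖p - sᵢ‖ ≤ ‖p - sⱼ‖` and `‖p - sⱼ‖ ≤ ‖sᵢ - sⱼ‖`, then `m ≤ 3 ^ d`. -/
theorem fcnn_representatives_bound {d m : ℕ} (p : EuclideanSpace ℝ (Fin d))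
    (s : Fin m → EuclideanSpace ℝ (Fin d))
    (hinj : Function.Injective s)
    (hne : ∀ i, s i ≠ p)
    (h : ∀ i j : Fin m, i < j → ‖p - s i‖ ≤ ‖p - s j‖ ∧ ‖p - s j‖ ≤ ‖s i - s j‖) :
    m ≤ 3 ^ d := by
  classical
  set u : Fin m → EuclideanSpace ℝ (Fin d) := fun i => ‖s i - p‖⁻¹ • (s i - p) with hu
  have hsep : ∀ i j : Fin m, i ≠ j → 1 ≤ ‖u i - u j‖ := by
    intro i j hij
    rcases lt_or_gt_of_ne hij with hlt | hlt
    · obtain ⟨h1, h2⟩ := h i j hlt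
      exact one_le_norm_sub_normalized _ _ (sub_ne_zero.2 (hne i))
        (by rw [norm_sub_rev (s i) p, norm_sub_rev (s j) p]; exact h1)
        (by rw [norm_sub_rev (s j) p, show s i - p - (s j - p) = s i - s j by abel]; exact h2)
    · obtain ⟨h1, h2⟩ := h j i hlt
      rw [norm_sub_rev]
      exact one_le_norm_sub_normalized _ _ (sub_ne_zero.2 (hne j))
        (by rw [norm_sub_rev (s j) p, norm_sub_rev (s i) p]; exact h1)
        (by rw [norm_sub_rev (s i) p, show s j - p - (s i - p) = s j - s i by abel]; exact h2)
  have huinj : Function.Injective u := by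
    intro i j hij
    by_contra hne'
    have := hsep i j hne'
    rw [hij, sub_self, norm_zero] at this
    linarith
  have hnorm : ∀ i, ‖u i‖ = 1 := by
    intro i
    have : (0:ℝ) < ‖s i - p‖ := norm_pos_iff.2 (sub_ne_zero.2 (hne i))
    simp [hu, norm_smul, abs_of_pos (inv_pos.2 this), inv_mul_cancel₀ this.ne']
  have key := card_le_of_separated_one (Finset.image u Finset.univ)
    (by
      intro c hc
      simp only [Finset.mem_image] at hc
      obtain ⟨i, _, rfl⟩ := hc
      exact (hnorm i).le)
    (by
      intro c hc d' hd' hcd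
      simp only [Finset.mem_image] at hc hd'
      obtain ⟨i, _, rfl⟩ := hc
      obtain ⟨j, _, rfl⟩ := hd'
      exact hsep i j fun hij => hcd (by rw [hij]))
  rwa [Finset.card_image_of_injective _ huinj, Finset.card_univ, Fintype.card_fin,
    finrank_euclideanSpace_fin] at key
end
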